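/- arXiv:1102.2280 — 10 statements merged into one kernel-verified Lean document; each statement's English description precedes it below -/
import Mathlib

section
/- Let (R,C) be a normalized bimatrix game with n pure strategies per player, let (x,y) be a Nash equilibrium of (R,C), and let ε ∈ (0,1]. Define x' = (1 − ε/5)·x + (ε/5)·u and y' = (1 − ε/5)·y + (ε/5)·u, where u = (1/n, …, 1/n) is the uniform mixed strategy. Then (x', y') is an ε-approximate Nash equilibrium of (R,C), and every coordinate of x' and of y' is at least ε/(5n). -/
open Finset

/-- `x` is a mixed strategy over `n` pure strategies. -/
def IsMixed (n : ℕ) (x : Fin n → ℝ) : Prop :=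
  (∀ i, 0 ≤ x i) ∧ ∑ i, x i = 1

/-- `(x, y)` is a Nash equilibrium of the bimatrix game `(R, C)`. -/
def IsNash (n : ℕ) (R C : Matrix (Fin n) (Fin n) ℝ) (x y : Fin n → ℝ) : Prop :=
  (∀ x' : Fin n → ℝ, IsMixed n x' →
    ∑ i, ∑ j, x' i * R i j * y j ≤ ∑ i, ∑ j, x i * R i j * y j) ∧
  (∀ y' : Fin n → ℝ, IsMixed n y' →
    ∑ i, ∑ j, x i * C i j * y' j ≤ ∑ i, ∑ j, x i * C i j * y j)

/-- `(x, y)` is an ε-approximate Nash equilibrium of the bimatrix game `(R, C)`. -/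
def IsApproxNash (n : ℕ) (R C : Matrix (Fin n) (Fin n) ℝ) (ε : ℝ) (x y : Fin n → ℝ) : Prop :=
  (∀ x' : Fin n → ℝ, IsMixed n x' →
    ∑ i, ∑ j, x' i * R i j * y j - ε ≤ ∑ i, ∑ j, x i * R i j * y j) ∧
  (∀ y' : Fin n → ℝ, IsMixed n y' →
    ∑ i, ∑ j, x i * C i j * y' j - ε ≤ ∑ i, ∑ j, x i * C i j * y j)

/-!
Let `x' = (1 - δ) x + δ u` and `y' = (1 - δ) y + δ v` for arbitrary mixed `u`, `v`. Payoffs of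
mixed strategies in a normalized game lie in `[-1, 1]`, so by bilinearity every row strategy `z`
has `z R y' ≤ (1 - δ) x R y + δ` (as `x` is a best response to `y`), while
`x' R y' ≥ (1 - δ)² x R y - δ (1 - δ) - δ`. The regret is therefore at most
`δ (1 - δ) x R y + 3δ - δ² ≤ 4δ`, which is `≤ ε` for `δ = ε / 5`. The column player is the row
player of the transposed game. Each coordinate of `x'` is at least the `δ / n` contributed by the
uniform strategy.
-/

open scoped Matrix

def payoff {ι κ : Type*} [Fintype ι] [Fintype κ] (M : Matrix ι κ ℝ) (a : ι → ℝ) (b : κ → ℝ) : ℝ :=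
  ∑ i, ∑ j, a i * M i j * b j

def mix {ι : Type*} (δ : ℝ) (a b : ι → ℝ) : ι → ℝ :=
  fun i => (1 - δ) * a i + δ * b i

section Payoff

variable {ι κ : Type*} [Fintype ι] [Fintype κ] (M : Matrix ι κ ℝ)

theorem payoff_transpose (a : ι → ℝ) (b : κ → ℝ) : payoff Mᵀ b a = payoff M a b := by
  unfold payoff
  rw [Finset.sum_comm]
  exact sum_congr rfl fun i _ => sum_congr rfl fun j _ => by simp only [Matrix.transpose_apply]; ring

theorem payoff_mix_left (δ : ℝ) (a a' : ι → ℝ) (b : κ → ℝ) :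
    payoff M (mix δ a a') b = (1 - δ) * payoff M a b + δ * payoff M a' b := by
  simp only [payoff, mix, mul_sum, ← sum_add_distrib]
  exact sum_congr rfl fun i _ => sum_congr rfl fun j _ => by ring

theorem payoff_mix_right (δ : ℝ) (a : ι → ℝ) (b b' : κ → ℝ) :
    payoff M a (mix δ b b') = (1 - δ) * payoff M a b + δ * payoff M a b' := by
  simp only [payoff, mix, mul_sum, ← sum_add_distrib]
  exact sum_congr rfl fun i _ => sum_congr rfl fun j _ => by ring

end Payoff

theorem isMixed_uniform {n : ℕ} (hn : 0 < n) : IsMixed n (fun _ => 1 / n) := by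
  refine ⟨fun _ => by positivity, ?_⟩
  simp only [sum_const, card_univ, Fintype.card_fin, nsmul_eq_mul]
  field_simp

theorem IsMixed.mix {n : ℕ} {a b : Fin n → ℝ} (ha : IsMixed n a) (hb : IsMixed n b) {δ : ℝ}
    (hδ0 : 0 ≤ δ) (hδ1 : δ ≤ 1) : IsMixed n (mix δ a b) := by
  refine ⟨fun i => ?_, ?_⟩
  · have := mul_nonneg (sub_nonneg.2 hδ1) (ha.1 i)
    have := mul_nonneg hδ0 (hb.1 i)
    simp only [_root_.mix]
    linarith
  · simp only [_root_.mix, sum_add_distrib, ← mul_sum, ha.2, hb.2]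
    ring

theorem mul_le_mix {ι : Type*} {a b : ι → ℝ} {δ : ℝ} (hδ1 : δ ≤ 1) {i : ι} (ha : 0 ≤ a i) :
    δ * b i ≤ mix δ a b i :=
  le_add_of_nonneg_left (mul_nonneg (sub_nonneg.2 hδ1) ha)

theorem abs_payoff_le_one {n : ℕ} {M : Matrix (Fin n) (Fin n) ℝ}
    (hM : ∀ i j, M i j ∈ Set.Icc (-1 : ℝ) 1) {a b : Fin n → ℝ}
    (ha : IsMixed n a) (hb : IsMixed n b) : |payoff M a b| ≤ 1 := by
  calc |payoff M a b| ≤ ∑ i, ∑ j, |a i * M i j * b j| :=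
        (abs_sum_le_sum_abs _ _).trans (sum_le_sum fun i _ => abs_sum_le_sum_abs _ _)
    _ ≤ ∑ i, ∑ j, a i * b j := by
        refine sum_le_sum fun i _ => sum_le_sum fun j _ => ?_
        rw [abs_mul, abs_mul, abs_of_nonneg (ha.1 i), abs_of_nonneg (hb.1 j)]
        have := abs_le.2 (hM i j)
        have := mul_nonneg (ha.1 i) (hb.1 j)
        nlinarith
    _ = 1 := by rw [← sum_mul_sum, ha.2, hb.2, one_mul]

theorem payoff_le_payoff_mix_add {n : ℕ} {M : Matrix (Fin n) (Fin n) ℝ}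
    (hM : ∀ i j, M i j ∈ Set.Icc (-1 : ℝ) 1) {x y u v : Fin n → ℝ}
    (hx : IsMixed n x) (hy : IsMixed n y) (hu : IsMixed n u) (hv : IsMixed n v)
    (hbest : ∀ z, IsMixed n z → payoff M z y ≤ payoff M x y)
    {δ : ℝ} (hδ0 : 0 ≤ δ) (hδ1 : δ ≤ 1) {z : Fin n → ℝ} (hz : IsMixed n z) :
    payoff M z (mix δ y v) - 4 * δ ≤ payoff M (mix δ x u) (mix δ y v) := by
  have bound := fun {a b} (ha : IsMixed n a) (hb : IsMixed n b) =>
    abs_le.1 (abs_payoff_le_one hM ha hb)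
  have hzv := (bound hz hv).2
  have hxy := (bound hx hy).2
  have hxv := (bound hx hv).1
  have huy' := (bound hu (hy.mix hv hδ0 hδ1)).1
  have hzy := hbest z hz
  rw [payoff_mix_right, payoff_mix_left, payoff_mix_right]
  have h1δ : 0 ≤ 1 - δ := sub_nonneg.2 hδ1
  nlinarith [mul_le_mul_of_nonneg_left hzy h1δ, mul_nonneg (mul_nonneg hδ0 h1δ) (sub_nonneg.2 hxy),
    mul_nonneg (mul_nonneg hδ0 h1δ) (neg_le_iff_add_nonneg.1 hxv), mul_nonneg hδ0 (sub_nonneg.2 hzv),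
    mul_nonneg hδ0 (neg_le_iff_add_nonneg.1 huy')]

theorem IsNash.isApproxNash_mix {n : ℕ} {R C : Matrix (Fin n) (Fin n) ℝ}
    (hR : ∀ i j, R i j ∈ Set.Icc (-1 : ℝ) 1) (hC : ∀ i j, C i j ∈ Set.Icc (-1 : ℝ) 1)
    {x y u v : Fin n → ℝ} (hx : IsMixed n x) (hy : IsMixed n y) (hu : IsMixed n u)
    (hv : IsMixed n v) (hxy : IsNash n R C x y) {δ : ℝ} (hδ0 : 0 ≤ δ) (hδ1 : δ ≤ 1) :
    IsApproxNash n R C (4 * δ) (mix δ x u) (mix δ y v) := by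
  refine ⟨fun z hz => payoff_le_payoff_mix_add hR hx hy hu hv hxy.1 hδ0 hδ1 hz, fun z hz => ?_⟩
  have hbest : ∀ w, IsMixed n w → payoff Cᵀ w x ≤ payoff Cᵀ y x := fun w hw => by
    rw [payoff_transpose, payoff_transpose]
    exact hxy.2 w hw
  have := payoff_le_payoff_mix_add (M := Cᵀ) (fun i j => hC j i) hy hx hv hu hbest hδ0 hδ1 hz
  rw [payoff_transpose, payoff_transpose] at this
  exact this

theorem IsApproxNash.mono {n : ℕ} {R C : Matrix (Fin n) (Fin n) ℝ} {ε ε' : ℝ}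
    {x y : Fin n → ℝ} (h : IsApproxNash n R C ε x y) (hε : ε ≤ ε') :
    IsApproxNash n R C ε' x y :=
  ⟨fun z hz => (sub_le_sub_left hε _).trans (h.1 z hz),
    fun z hz => (sub_le_sub_left hε _).trans (h.2 z hz)⟩

/-- Mixing a Nash equilibrium with weight `ε/5` of the uniform strategy yields an
`ε`-approximate Nash equilibrium all of whose probabilities are at least `ε/(5n)`. -/
theorem stmt1 (n : ℕ) (hn : 0 < n) (R C : Matrix (Fin n) (Fin n) ℝ)
    (hR : ∀ i j, R i j ∈ Set.Icc (-1 : ℝ) 1) (hC : ∀ i j, C i j ∈ Set.Icc (-1 : ℝ) 1)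
    (x y : Fin n → ℝ) (hx : IsMixed n x) (hy : IsMixed n y)
    (hxy : IsNash n R C x y)
    (ε : ℝ) (hε : 0 < ε) (hε1 : ε ≤ 1) :
    IsApproxNash n R C ε
      (fun i => (1 - ε / 5) * x i + (ε / 5) * (1 / n))
      (fun j => (1 - ε / 5) * y j + (ε / 5) * (1 / n)) ∧
    (∀ i, ε / (5 * n) ≤ (1 - ε / 5) * x i + (ε / 5) * (1 / n)) ∧
    (∀ j, ε / (5 * n) ≤ (1 - ε / 5) * y j + (ε / 5) * (1 / n)) := by
  have hδ0 : 0 ≤ ε / 5 := by positivity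
  have hδ1 : ε / 5 ≤ 1 := by linarith
  have hu := isMixed_uniform hn
  have hsplit : ε / (5 * n) = ε / 5 * (1 / n) := by ring
  refine ⟨(hxy.isApproxNash_mix hR hC hx hy hu hu hδ0 hδ1).mono (by linarith), fun i => ?_,
    fun j => ?_⟩
  · rw [hsplit]
    exact mul_le_mix (b := fun _ => 1 / n) hδ1 (hx.1 i)
  · rw [hsplit]
    exact mul_le_mix (b := fun _ => 1 / n) hδ1 (hy.1 j)
end

section
/- Let (R,C) be a normalized bimatrix game with n ≥ 2 pure strategies per player, let (x,y) be a Nash equilibrium of (R,C), let ε > 0, and let t be a positive integer with t ≥ 16·ln(n)/ε². Let i_1, …, i_t be i.i.d. samples from the probability distribution x on {1,…,n} and j_1, …, j_t be i.i.d. samples from y, with all 2t samples mutually independent; let 𝒳 be the empirical distribution of the i-samples (𝒳_i = |{s : i_s = i}|/t) and 𝒴 that of the j-samples. Then with probability at least 1 − 4/n the following all hold: (1) (𝒳,𝒴) is an ε-well-supported Nash equilibrium of (R,C); (2) |(R𝒴)_i − (Ry)_i| ≤ ε/2 for all i ∈ {1,…,n}; (3) |(𝒳ᵀC)_j − (xᵀC)_j|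 ≤ ε/2 for all j ∈ {1,…,n}. -/
open Finset

open scoped Classical

/-- `(x, y)` is an ε-well-supported Nash equilibrium of the bimatrix game `(R, C)`. -/
def IsWSNE (n : ℕ) (R C : Matrix (Fin n) (Fin n) ℝ) (ε : ℝ) (x y : Fin n → ℝ) : Prop :=
  (∀ i i' : Fin n, 0 < x i → ∑ j, R i j * y j ≥ ∑ j, R i' j * y j - ε) ∧
  (∀ j j' : Fin n, 0 < y j → ∑ i, x i * C i j ≥ ∑ i, x i * C i j' - ε)

/-- The empirical distribution of a `t`-tuple of samples from `{1,…,n}`. -/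
noncomputable def empDist (n t : ℕ) (a : Fin t → Fin n) (i : Fin n) : ℝ :=
  ((univ.filter fun s => a s = i).card : ℝ) / t

/-!
Each empirical payoff `(R 𝒴)ᵢ = 𝒴 ⬝ᵥ Rᵢ` is the average of `t` independent samples of a
`[-1, 1]`-valued variable with mean `(R y)ᵢ`, so by Hoeffding's inequality it is off by more than
`ε/2` with probability at most `2 exp(-t ε²/8) ≤ 2/n²`; a union bound over the `n` rows, and
likewise over the `n` columns, leaves failure probability at most `4/n`. On the complementary event
the strategies in the support of `𝒳` were all drawn from the support of `x`, hence are best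
responses to `y`, hence `ε`-best responses to `𝒴` (and symmetrically for `𝒴`).
-/

open MeasureTheory ProbabilityTheory Real Matrix

section EmpiricalDistribution

variable {n t : ℕ}

lemma empDist_dotProduct (a : Fin t → Fin n) (h : Fin n → ℝ) :
    empDist n t a ⬝ᵥ h = (∑ s, h (a s)) / t := by
  rw [← Finset.sum_fiberwise univ a (fun s => h (a s)), Finset.sum_div]
  refine Finset.sum_congr rfl fun i _ => ?_
  rw [Finset.sum_congr rfl fun s hs => by rw [(Finset.mem_filter.mp hs).2], Finset.sum_const,
    nsmul_eq_mul, empDist]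
  ring

lemma exists_eq_of_empDist_pos {a : Fin t → Fin n} {i : Fin n} (h : 0 < empDist n t a i) :
    ∃ s, a s = i := by
  by_contra! hne
  simp [empDist, Finset.filter_false_of_mem fun s _ => hne s] at h

lemma pos_of_empDist_pos {x : Fin n → ℝ} (hx : ∀ i, 0 ≤ x i) {a : Fin t → Fin n}
    (ha : ∏ s, x (a s) ≠ 0) {i : Fin n} (hi : 0 < empDist n t a i) : 0 < x i := by
  obtain ⟨s, rfl⟩ := exists_eq_of_empDist_pos hi
  exact (hx _).lt_of_ne' (Finset.prod_ne_zero_iff.mp ha s (Finset.mem_univ s))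

end EmpiricalDistribution

section BestResponse

variable {n : ℕ} {x u : Fin n → ℝ}

lemma isMixed_single (i : Fin n) : IsMixed n (Pi.single i 1) :=
  ⟨fun k => by by_cases h : k = i <;> simp [h], by simp⟩

lemma le_dotProduct_of_forall_isMixed (hbest : ∀ x', IsMixed n x' → x' ⬝ᵥ u ≤ x ⬝ᵥ u)
    (i : Fin n) : u i ≤ x ⬝ᵥ u := by
  simpa using hbest _ (isMixed_single i)

lemma IsMixed.eq_dotProduct_of_pos (hx : IsMixed n x)
    (hbest : ∀ x', IsMixed n x' → x' ⬝ᵥ u ≤ x ⬝ᵥ u) {i : Fin n} (hi : 0 < x i) :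
    u i = x ⬝ᵥ u := by
  have hgap : ∀ k, 0 ≤ x k * (x ⬝ᵥ u - u k) := fun k =>
    mul_nonneg (hx.1 k) (sub_nonneg.mpr (le_dotProduct_of_forall_isMixed hbest k))
  -- nonnegative gaps whose `x`-average is zero
  have hsum : ∑ k, x k * (x ⬝ᵥ u - u k) = 0 := by
    simp only [mul_sub, Finset.sum_sub_distrib, ← Finset.sum_mul, hx.2, one_mul, dotProduct,
      sub_self]
  have := (Finset.sum_eq_zero_iff_of_nonneg fun k _ => hgap k).mp hsum i (Finset.mem_univ i)
  rcases mul_eq_zero.mp this with h | h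
  · exact absurd h hi.ne'
  · linarith

lemma IsMixed.sub_le_of_forall_abs_sub_le (hx : IsMixed n x)
    (hbest : ∀ x', IsMixed n x' → x' ⬝ᵥ u ≤ x ⬝ᵥ u) {U : Fin n → ℝ} {ε : ℝ}
    (hU : ∀ i, |U i - u i| ≤ ε / 2) {i : Fin n} (hi : 0 < x i) (i' : Fin n) :
    U i' - ε ≤ U i := by
  have h₁ := hx.eq_dotProduct_of_pos hbest hi
  have h₂ := le_dotProduct_of_forall_isMixed hbest i'
  linarith [(abs_le.mp (hU i)).1, (abs_le.mp (hU i')).2]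

end BestResponse

lemma sum_sum_mul_mul_eq_dotProduct_mulVec {n : ℕ} (x y : Fin n → ℝ)
    (A : Matrix (Fin n) (Fin n) ℝ) : ∑ i, ∑ j, x i * A i j * y j = x ⬝ᵥ (A *ᵥ y) := by
  simp [dotProduct, mulVec, Finset.mul_sum, mul_assoc]

lemma IsNash.isWSNE_of_forall_abs_sub_le {n : ℕ} {R C : Matrix (Fin n) (Fin n) ℝ}
    {x y X Y : Fin n → ℝ} (hx : IsMixed n x) (hy : IsMixed n y) (hxy : IsNash n R C x y)
    (hX : ∀ i, 0 < X i → 0 < x i) (hY : ∀ j, 0 < Y j → 0 < y j) {ε : ℝ}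
    (hR : ∀ i, |(R *ᵥ Y) i - (R *ᵥ y) i| ≤ ε / 2)
    (hC : ∀ j, |(X ᵥ* C) j - (x ᵥ* C) j| ≤ ε / 2) :
    IsWSNE n R C ε X Y := by
  have hrow : ∀ x', IsMixed n x' → x' ⬝ᵥ (R *ᵥ y) ≤ x ⬝ᵥ (R *ᵥ y) := fun x' hx' => by
    simpa only [sum_sum_mul_mul_eq_dotProduct_mulVec] using hxy.1 x' hx'
  have hcol : ∀ y', IsMixed n y' → y' ⬝ᵥ (x ᵥ* C) ≤ y ⬝ᵥ (x ᵥ* C) := fun y' hy' => by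
    simpa only [sum_sum_mul_mul_eq_dotProduct_mulVec, dotProduct_mulVec,
      dotProduct_comm _ (x ᵥ* C)] using hxy.2 y' hy'
  exact ⟨fun i i' hi => hx.sub_le_of_forall_abs_sub_le hrow hR (hX i hi) i',
    fun j j' hj => hy.sub_le_of_forall_abs_sub_le hcol hC (hY j hj) j'⟩

section Sampling

variable {n t : ℕ}

noncomputable def strategyLaw (p : Fin n → ℝ) : Measure (Fin n) :=
  ∑ i, ENNReal.ofReal (p i) • Measure.dirac i

noncomputable def sampleLaw (p : Fin n → ℝ) (t : ℕ) : Measure (Fin t → Fin n) :=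
  Measure.pi fun _ => strategyLaw p

lemma strategyLaw_singleton (p : Fin n → ℝ) (i : Fin n) :
    strategyLaw p {i} = ENNReal.ofReal (p i) := by
  simp [strategyLaw, Set.indicator_apply]

lemma strategyLaw_univ (p : Fin n → ℝ) :
    strategyLaw p Set.univ = ∑ i, ENNReal.ofReal (p i) := by
  simp [strategyLaw]

instance (p : Fin n → ℝ) : IsFiniteMeasure (strategyLaw p) :=
  ⟨by simp [strategyLaw_univ, ENNReal.sum_lt_top]⟩

instance (p : Fin n → ℝ) (t : ℕ) : IsFiniteMeasure (sampleLaw p t) := by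
  unfold sampleLaw; infer_instance

lemma IsMixed.isProbabilityMeasure_strategyLaw {p : Fin n → ℝ} (hp : IsMixed n p) :
    IsProbabilityMeasure (strategyLaw p) :=
  ⟨by rw [strategyLaw_univ, ← ENNReal.ofReal_sum_of_nonneg fun i _ => hp.1 i, hp.2,
    ENNReal.ofReal_one]⟩

lemma IsMixed.isProbabilityMeasure_sampleLaw {p : Fin n → ℝ} (hp : IsMixed n p) (t : ℕ) :
    IsProbabilityMeasure (sampleLaw p t) := by
  have := hp.isProbabilityMeasure_strategyLaw
  unfold sampleLaw
  infer_instance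

lemma integral_strategyLaw {p : Fin n → ℝ} (hp : ∀ i, 0 ≤ p i) (f : Fin n → ℝ) :
    ∫ i, f i ∂strategyLaw p = p ⬝ᵥ f := by
  rw [integral_fintype .of_finite]
  simp [Measure.real, strategyLaw_singleton, hp, dotProduct]

lemma sampleLaw_real_singleton {p : Fin n → ℝ} (hp : ∀ i, 0 ≤ p i) (a : Fin t → Fin n) :
    (sampleLaw p t).real {a} = ∏ s, p (a s) := by
  simp [sampleLaw, Measure.real, Measure.pi_singleton, strategyLaw_singleton,
    ENNReal.toReal_prod, hp]

lemma sampleLaw_real_setOf {p : Fin n → ℝ} (hp : ∀ i, 0 ≤ p i)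
    (P : (Fin t → Fin n) → Prop) [DecidablePred P] :
    (sampleLaw p t).real {a | P a} = ∑ a, if P a then ∏ s, p (a s) else 0 := by
  rw [← Finset.coe_filter_univ, ← sum_measureReal_singleton, Finset.sum_filter]
  simp only [sampleLaw_real_singleton hp]

lemma IsMixed.hasSubgaussianMGF_strategyLaw {p h : Fin n → ℝ} (hp : IsMixed n p)
    (hh : ∀ i, h i ∈ Set.Icc (-1 : ℝ) 1) :
    HasSubgaussianMGF (fun i => h i - p ⬝ᵥ h) 1 (strategyLaw p) := by
  have := hp.isProbabilityMeasure_strategyLaw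
  have hoeffding := hasSubgaussianMGF_of_mem_Icc (μ := strategyLaw p)
    Measurable.of_discrete.aemeasurable (ae_of_all _ hh)
  rw [integral_strategyLaw hp.1] at hoeffding
  convert hoeffding
  norm_num

lemma IsMixed.sampleLaw_real_le_exp {p h : Fin n → ℝ} (hp : IsMixed n p)
    (hh : ∀ i, h i ∈ Set.Icc (-1 : ℝ) 1) (ht : 0 < t) {δ : ℝ} (hδ : 0 ≤ δ) :
    (sampleLaw p t).real {a | δ ≤ empDist n t a ⬝ᵥ h - p ⬝ᵥ h} ≤ exp (-(t * δ ^ 2 / 2)) := by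
  have := hp.isProbabilityMeasure_strategyLaw
  have hindep := iIndepFun_pi (μ := fun _ : Fin t => strategyLaw p)
    (X := fun _ i => h i - p ⬝ᵥ h) fun _ => Measurable.of_discrete.aemeasurable
  have hsub : ∀ s ∈ (univ : Finset (Fin t)),
      HasSubgaussianMGF (fun a : Fin t → Fin n => h (a s) - p ⬝ᵥ h) 1
        (Measure.pi fun _ => strategyLaw p) :=
    fun s _ => .of_map (measurable_pi_apply s).aemeasurable <| by
      rw [(measurePreserving_eval (fun _ => strategyLaw p) s).map_eq]
      exact hp.hasSubgaussianMGF_strategyLaw hh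
  have htpos : (0 : ℝ) < t := Nat.cast_pos.mpr ht
  have hset : {a | δ ≤ empDist n t a ⬝ᵥ h - p ⬝ᵥ h}
      = {a : Fin t → Fin n | t * δ ≤ ∑ s, (h (a s) - p ⬝ᵥ h)} := by
    ext a
    simp only [Set.mem_ofPred_eq, empDist_dotProduct, Finset.sum_sub_distrib, Finset.sum_const,
      Finset.card_univ, Fintype.card_fin, nsmul_eq_mul]
    rw [le_sub_iff_add_le, le_div_iff₀ htpos]
    constructor <;> intro h <;> linarith
  rw [hset]
  refine (HasSubgaussianMGF.measure_sum_ge_le_of_iIndepFun hindep hsub (by positivity)).trans_eq ?_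
  congr 1
  simp only [Finset.sum_const, Finset.card_univ, Fintype.card_fin, nsmul_eq_mul, mul_one]
  push_cast
  field_simp

lemma IsMixed.sampleLaw_real_abs_gt_le {p h : Fin n → ℝ} (hp : IsMixed n p)
    (hh : ∀ i, h i ∈ Set.Icc (-1 : ℝ) 1) (ht : 0 < t) {δ : ℝ} (hδ : 0 ≤ δ) :
    (sampleLaw p t).real {a | δ < |empDist n t a ⬝ᵥ h - p ⬝ᵥ h|}
      ≤ 2 * exp (-(t * δ ^ 2 / 2)) := by
  have hneg : ∀ i, (-h) i ∈ Set.Icc (-1 : ℝ) 1 := fun i =>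
    ⟨neg_le_neg (hh i).2, by simpa using neg_le_neg (hh i).1⟩
  calc (sampleLaw p t).real {a | δ < |empDist n t a ⬝ᵥ h - p ⬝ᵥ h|}
      ≤ (sampleLaw p t).real ({a | δ ≤ empDist n t a ⬝ᵥ h - p ⬝ᵥ h}
          ∪ {a | δ ≤ empDist n t a ⬝ᵥ (-h) - p ⬝ᵥ (-h)}) := by
        refine measureReal_mono fun a ha => ?_
        simp only [Set.mem_ofPred_eq, Set.mem_union, dotProduct_neg] at ha ⊢
        rcases lt_abs.mp ha with h | h
        · exact .inl h.le
        · exact .inr (by linarith)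
    _ ≤ exp (-(t * δ ^ 2 / 2)) + exp (-(t * δ ^ 2 / 2)) :=
        (measureReal_union_le _ _).trans <|
          add_le_add (hp.sampleLaw_real_le_exp hh ht hδ) (hp.sampleLaw_real_le_exp hneg ht hδ)
    _ = 2 * exp (-(t * δ ^ 2 / 2)) := by ring

lemma IsMixed.one_sub_le_sum_ite_forall_abs_le {κ : Type*} [Fintype κ] {p : Fin n → ℝ}
    (hp : IsMixed n p) {M : κ → Fin n → ℝ} (hM : ∀ k i, M k i ∈ Set.Icc (-1 : ℝ) 1)
    (ht : 0 < t) {δ : ℝ} (hδ : 0 ≤ δ) :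
    1 - Fintype.card κ * (2 * exp (-(t * δ ^ 2 / 2))) ≤
      ∑ a : Fin t → Fin n,
        if ∀ k, |empDist n t a ⬝ᵥ M k - p ⬝ᵥ M k| ≤ δ then ∏ s, p (a s) else 0 := by
  have := hp.isProbabilityMeasure_sampleLaw t
  set good := {a : Fin t → Fin n | ∀ k, |empDist n t a ⬝ᵥ M k - p ⬝ᵥ M k| ≤ δ}
  have hbad : goodᶜ = ⋃ k, {a | δ < |empDist n t a ⬝ᵥ M k - p ⬝ᵥ M k|} := by
    ext a; simp [good]
  calc 1 - Fintype.card κ * (2 * exp (-(t * δ ^ 2 / 2)))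
      ≤ 1 - (sampleLaw p t).real goodᶜ := by
        rw [hbad]
        gcongr
        refine (measureReal_iUnion_fintype_le _).trans <|
          (Finset.sum_le_sum fun k _ => hp.sampleLaw_real_abs_gt_le (hM k) ht hδ).trans_eq ?_
        simp
    _ = (sampleLaw p t).real good := by
        rw [measureReal_compl .of_discrete, probReal_univ, sub_sub_cancel]
    _ = _ := sampleLaw_real_setOf hp.1 _

end Sampling

lemma natCast_mul_two_mul_exp_le {n t : ℕ} (hn : 0 < n) {ε : ℝ} (hε : 0 < ε)
    (hts : 16 * Real.log n / ε ^ 2 ≤ t) :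
    n * (2 * exp (-(t * (ε / 2) ^ 2 / 2))) ≤ 2 / n := by
  have hnpos : (0 : ℝ) < n := Nat.cast_pos.mpr hn
  have hlog : Real.log n * 2 ≤ t * (ε / 2) ^ 2 / 2 := by
    rw [div_le_iff₀ (by positivity)] at hts
    linarith
  calc n * (2 * exp (-(t * (ε / 2) ^ 2 / 2)))
      ≤ n * (2 * exp (-(Real.log n * 2))) := by gcongr
    _ = 2 / n := by
      rw [exp_neg, exp_mul, exp_log hnpos, rpow_two]
      field_simp

lemma ite_le_ite_of_ne_zero_imp {P Q : Prop} {_ : Decidable P} {_ : Decidable Q} {w : ℝ}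
    (hw : 0 ≤ w) (h : w ≠ 0 → P → Q) : (if P then w else 0) ≤ if Q then w else 0 := by
  by_cases hw0 : w = 0
  · simp [hw0]
  split_ifs with hP hQ
  exacts [le_rfl, absurd (h hw0 hP) hQ, hw, le_rfl]

lemma one_sub_two_mul_le_mul {q A B : ℝ} (hq : q ≤ 1) (hA : 1 - q ≤ A) (hB : 1 - q ≤ B) :
    1 - 2 * q ≤ A * B := by
  nlinarith [mul_le_mul hA hB (sub_nonneg.2 hq) ((sub_nonneg.2 hq).trans hA), sq_nonneg q]

/-- Lipton–Markakis–Mehta sampling: if `(x,y)` is a Nash equilibrium of a normalized game and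
`t ≥ 16 ln n / ε²`, then, sampling `t` i.i.d. pure strategies from `x` and `t` from `y`
(independently), with probability at least `1 − 4/n` the pair of empirical distributions is an
`ε`-well-supported Nash equilibrium whose payoff vectors are `ε/2`-close to those of `(x,y)`. -/
theorem stmt2 (n t : ℕ) (hn : 2 ≤ n) (ht : 0 < t)
    (R C : Matrix (Fin n) (Fin n) ℝ)
    (hR : ∀ i j, R i j ∈ Set.Icc (-1 : ℝ) 1) (hC : ∀ i j, C i j ∈ Set.Icc (-1 : ℝ) 1)
    (x y : Fin n → ℝ) (hx : IsMixed n x) (hy : IsMixed n y)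
    (hxy : IsNash n R C x y)
    (ε : ℝ) (hε : 0 < ε)
    (hts : 16 * Real.log n / ε ^ 2 ≤ t) :
    1 - 4 / (n : ℝ) ≤
      ∑ a : Fin t → Fin n, ∑ b : Fin t → Fin n,
        (if IsWSNE n R C ε (empDist n t a) (empDist n t b) ∧
            (∀ i, |∑ j, R i j * empDist n t b j - ∑ j, R i j * y j| ≤ ε / 2) ∧
            (∀ j, |∑ i, empDist n t a i * C i j - ∑ i, x i * C i j| ≤ ε / 2)
          then (∏ s, x (a s)) * ∏ s, y (b s) else 0) := by
  have hδ : 0 ≤ ε / 2 := by positivity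
  have htail := sub_le_sub_left (natCast_mul_two_mul_exp_le (by omega) hε hts) 1
  have hA := hx.one_sub_le_sum_ite_forall_abs_le (M := Cᵀ) (fun j i => hC i j) ht hδ
  have hB := hy.one_sub_le_sum_ite_forall_abs_le (M := R) hR ht hδ
  rw [Fintype.card_fin] at hA hB
  rw [show (4 : ℝ) / n = 2 * (2 / n) by ring]
  refine (one_sub_two_mul_le_mul (div_le_one_of_le₀ (by exact_mod_cast hn) (by positivity))
    (htail.trans hA) (htail.trans hB)).trans ?_
  rw [Finset.sum_mul_sum]
  refine Finset.sum_le_sum fun a _ => Finset.sum_le_sum fun b _ => ?_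
  rw [ite_zero_mul_ite_zero]
  refine ite_le_ite_of_ne_zero_imp
    (mul_nonneg (Finset.prod_nonneg fun s _ => hx.1 _) (Finset.prod_nonneg fun s _ => hy.1 _))
    fun hw0 ⟨hcol, hrow⟩ => ?_
  replace hrow : ∀ i, |(R *ᵥ empDist n t b) i - (R *ᵥ y) i| ≤ ε / 2 := fun i => by
    have := hrow i
    rwa [dotProduct_comm, dotProduct_comm y] at this
  exact ⟨hxy.isWSNE_of_forall_abs_sub_le hx hy
    (fun i => pos_of_empDist_pos hx.1 (left_ne_zero_of_mul hw0))
    (fun j => pos_of_empDist_pos hy.1 (right_ne_zero_of_mul hw0)) hrow hcol, hrow, hcol⟩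
end

section
/- Let (R,C) be a normalized bimatrix game with n pure strategies per player, let (x,y) be a Nash equilibrium of (R,C), and let ε > 0. Suppose 𝒳 and 𝒴 are mixed strategies such that: (a) 𝒳_i > 0 implies x_i > 0 for every i, and 𝒴_j > 0 implies y_j > 0 for every j; (b) |(R𝒴)_i − (Ry)_i| ≤ ε/2 for all i; (c) |(𝒳ᵀC)_j − (xᵀC)_j| ≤ ε/2 for all j. Then (𝒳,𝒴) is an ε-well-supported Nash equilibrium of (R,C). -/
open Finset

/-! A Nash equilibrium plays only best responses: no pure strategy beats the expected payoff
`∑ k, x k * f k`, and since that expectation is a convex combination of the `f k`, every `f k`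
with `x k > 0` attains it. Payoff vectors that are `ε/2`-close to those of the equilibrium
therefore leave every strategy in its support `ε`-close to optimal. -/

theorem isMixed_pi_single {n : ℕ} (k : Fin n) : IsMixed n (Pi.single k 1) :=
  ⟨fun i => by by_cases h : i = k <;> simp [h], by simp⟩

theorem IsMixed.le_of_pos_of_forall_le_expectation {n : ℕ} {x f : Fin n → ℝ}
    (hx : IsMixed n x) (hf : ∀ k, f k ≤ ∑ k, x k * f k) {i : Fin n} (hi : 0 < x i)
    (i' : Fin n) : f i' ≤ f i := by
  set v := ∑ k, x k * f k
  have hgap : ∑ k, x k * (v - f k) = 0 := by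
    simp only [mul_sub, sum_sub_distrib, ← sum_mul, hx.2, one_mul, v, sub_self]
  have hgap_i : x i * (v - f i) = 0 :=
    (sum_eq_zero_iff_of_nonneg fun k _ => mul_nonneg (hx.1 k) (sub_nonneg.2 (hf k))).1
      hgap i (mem_univ i)
  have hvi : v = f i := by
    simpa [sub_eq_zero, hi.ne'] using hgap_i
  exact hvi ▸ hf i'

namespace IsNash

variable {n : ℕ} {R C : Matrix (Fin n) (Fin n) ℝ} {x y : Fin n → ℝ}

theorem row_payoff_le_expectation (hxy : IsNash n R C x y) (k : Fin n) :
    ∑ j, R k j * y j ≤ ∑ i, x i * ∑ j, R i j * y j := by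
  simpa [Pi.single_apply, ite_mul, mul_sum, mul_assoc] using hxy.1 _ (isMixed_pi_single k)

theorem col_payoff_le_expectation (hxy : IsNash n R C x y) (k : Fin n) :
    ∑ i, x i * C i k ≤ ∑ j, y j * ∑ i, x i * C i j := by
  have h := hxy.2 _ (isMixed_pi_single k)
  simp only [Pi.single_apply, mul_ite, mul_one, mul_zero, sum_ite_eq', mem_univ, if_true] at h
  rw [sum_comm] at h
  simpa only [mul_comm (y _), sum_mul] using h

end IsNash

theorem stmt3_general (n : ℕ) (R C : Matrix (Fin n) (Fin n) ℝ)
    (x y : Fin n → ℝ) (hx : IsMixed n x) (hy : IsMixed n y)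
    (hxy : IsNash n R C x y)
    (ε : ℝ)
    (X Y : Fin n → ℝ)
    (hsuppX : ∀ i, 0 < X i → 0 < x i)
    (hsuppY : ∀ j, 0 < Y j → 0 < y j)
    (hclose1 : ∀ i, |∑ j, R i j * Y j - ∑ j, R i j * y j| ≤ ε / 2)
    (hclose2 : ∀ j, |∑ i, X i * C i j - ∑ i, x i * C i j| ≤ ε / 2) :
    IsWSNE n R C ε X Y := by
  constructor
  · intro i i' hXi
    have hbest := hx.le_of_pos_of_forall_le_expectation
      hxy.row_payoff_le_expectation (hsuppX i hXi) i'
    linarith [(abs_le.mp (hclose1 i)).1, (abs_le.mp (hclose1 i')).2]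
  · intro j j' hYj
    have hbest := hy.le_of_pos_of_forall_le_expectation
      hxy.col_payoff_le_expectation (hsuppY j hYj) j'
    linarith [(abs_le.mp (hclose2 j)).1, (abs_le.mp (hclose2 j')).2]

/-- If `(𝒳, 𝒴)` are mixed strategies supported inside the supports of a Nash equilibrium
`(x, y)` and whose payoff vectors are `ε/2`-close to those of `(x, y)`, then `(𝒳, 𝒴)` is an
`ε`-well-supported Nash equilibrium. -/
theorem stmt3 (n : ℕ) (R C : Matrix (Fin n) (Fin n) ℝ)
    (hR : ∀ i j, R i j ∈ Set.Icc (-1 : ℝ) 1) (hC : ∀ i j, C i j ∈ Set.Icc (-1 : ℝ) 1)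
    (x y : Fin n → ℝ) (hx : IsMixed n x) (hy : IsMixed n y)
    (hxy : IsNash n R C x y)
    (ε : ℝ) (hε : 0 < ε)
    (X Y : Fin n → ℝ) (hX : IsMixed n X) (hY : IsMixed n Y)
    (hsuppX : ∀ i, 0 < X i → 0 < x i)
    (hsuppY : ∀ j, 0 < Y j → 0 < y j)
    (hclose1 : ∀ i, |∑ j, R i j * Y j - ∑ j, R i j * y j| ≤ ε / 2)
    (hclose2 : ∀ j, |∑ i, X i * C i j - ∑ i, x i * C i j| ≤ ε / 2) :
    IsWSNE n R C ε X Y :=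
  stmt3_general n R C x y hx hy hxy ε X Y hsuppX hsuppY hclose1 hclose2
end

section
/- Let δ ∈ (0,1] and ε > 0, let (R,C) be a normalized bimatrix game with n ≥ 2 pure strategies per player, and let (x,y) be a Nash equilibrium of (R,C) such that x_i ≤ 1/(δn) for all i and y_j ≤ 1/(δn) for all j. Let t be a positive integer with t ≥ 16·ln(n)/ε². Define 𝒜 as the set of all ordered t-tuples A ∈ {1,…,n}^t whose empirical distribution 𝒳 (where 𝒳_i is the fraction of entries of A equal to i) satisfies |(𝒳ᵀC)_j − (xᵀC)_j| ≤ ε/2 for all j, and define ℬ as the set of all ordered t-tuples B ∈ {1,…,n}^t whose empirical distribution 𝒴 satisfies |(R𝒴)_i − (Ry)_i| ≤ ε/2 for all i. Then |𝒜| ≥ (1 − 4/n)·(δn)^t and |ℬ| ≥ (1 − 4/n)·(δn)^t. -/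
/-!
Draw the `t` entries of a tuple independently from `x`. For a fixed column `j`, the empirical
payoff `(𝒳ᵀC)_j` is the mean of `t` independent variables with values in `[-1, 1]` and mean
`(xᵀC)_j`, so by Hoeffding's inequality it deviates by more than `ε/2` with probability at most
`2 exp (-t ε² / 8) ≤ 2 / n²`. A union bound over the `n` columns leaves the good tuples with
probability at least `1 - 2/n`, and since each tuple has probability `∏ₛ x_{A s} ≤ (δn)⁻ᵗ`,
there are at least `(1 - 2/n) (δn)ᵗ` of them.
-/

open Finset

open scoped Classical

open MeasureTheory ProbabilityTheory

namespace IsMixed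

variable {n : ℕ} {x : Fin n → ℝ}

noncomputable def toPMF (hx : IsMixed n x) : PMF (Fin n) :=
  PMF.ofFintype (fun i => ENNReal.ofReal (x i)) (by
    rw [← ENNReal.ofReal_sum_of_nonneg fun i _ => hx.1 i, hx.2, ENNReal.ofReal_one])

lemma toReal_toPMF_apply (hx : IsMixed n x) (i : Fin n) : (hx.toPMF i).toReal = x i :=
  ENNReal.toReal_ofReal (hx.1 i)

lemma integral_toMeasure_toPMF (hx : IsMixed n x) (f : Fin n → ℝ) :
    ∫ i, f i ∂hx.toPMF.toMeasure = ∑ i, x i * f i := by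
  simp only [PMF.integral_eq_sum, toReal_toPMF_apply, smul_eq_mul]

lemma hasSubgaussianMGF_sub_sum_mul (hx : IsMixed n x) {f : Fin n → ℝ} (hf : ∀ i, |f i| ≤ 1) :
    HasSubgaussianMGF (fun i => f i - ∑ k, x k * f k) 1 hx.toPMF.toMeasure := by
  have h := hasSubgaussianMGF_of_mem_Icc (μ := hx.toPMF.toMeasure) (a := -1) (b := 1)
    (X := f) (Measurable.of_discrete).aemeasurable (ae_of_all _ fun i => abs_le.mp (hf i))
  rw [integral_toMeasure_toPMF] at h
  convert h
  norm_num

noncomputable def sampleMeasure (hx : IsMixed n x) (t : ℕ) : Measure (Fin t → Fin n) :=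
  Measure.pi fun _ => hx.toPMF.toMeasure

instance (hx : IsMixed n x) (t : ℕ) : IsProbabilityMeasure (hx.sampleMeasure t) := by
  unfold sampleMeasure; infer_instance

lemma sampleMeasure_real_singleton (hx : IsMixed n x) {t : ℕ} (A : Fin t → Fin n) :
    (hx.sampleMeasure t).real {A} = ∏ s, x (A s) := by
  simp [sampleMeasure, measureReal_def, Measure.pi_singleton, ENNReal.toReal_prod,
    toReal_toPMF_apply]

lemma hasSubgaussianMGF_sample_sub_sum_mul (hx : IsMixed n x) {t : ℕ} {f : Fin n → ℝ}
    (hf : ∀ i, |f i| ≤ 1) (s : Fin t) :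
    HasSubgaussianMGF (fun A : Fin t → Fin n => f (A s) - ∑ k, x k * f k) 1
      (hx.sampleMeasure t) := by
  refine HasSubgaussianMGF.of_map (X := fun i => f i - ∑ k, x k * f k)
    (measurable_pi_apply s).aemeasurable ?_
  rw [sampleMeasure, (measurePreserving_eval _ s).map_eq]
  exact hx.hasSubgaussianMGF_sub_sum_mul hf

lemma sum_empDist_mul {n t : ℕ} (A : Fin t → Fin n) (f : Fin n → ℝ) :
    ∑ i, empDist n t A i * f i = (∑ s, f (A s)) / t := by
  simp_rw [empDist, div_mul_eq_mul_div, ← Finset.sum_div, ← nsmul_eq_mul, ← Finset.sum_const]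
  rw [Finset.sum_fiberwise' univ A f]

lemma sampleMeasure_real_le_sum_empDist_sub (hx : IsMixed n x) {t : ℕ} (ht : 0 < t)
    {f : Fin n → ℝ} (hf : ∀ i, |f i| ≤ 1) {ε : ℝ} (hε : 0 ≤ ε) :
    (hx.sampleMeasure t).real {A | ε ≤ ∑ i, empDist n t A i * f i - ∑ i, x i * f i}
      ≤ Real.exp (-(t * ε ^ 2) / 2) := by
  have ht' : (0 : ℝ) < t := by exact_mod_cast ht
  have hset : {A : Fin t → Fin n | ε ≤ ∑ i, empDist n t A i * f i - ∑ i, x i * f i}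
      = {A | t * ε ≤ ∑ s : Fin t, (f (A s) - ∑ k, x k * f k)} := by
    ext A
    simp only [Set.mem_ofPred_eq, sum_empDist_mul, Finset.sum_sub_distrib, Finset.sum_const,
      Finset.card_univ, Fintype.card_fin, nsmul_eq_mul]
    rw [le_sub_iff_add_le, le_div_iff₀ ht', le_sub_iff_add_le, mul_comm, mul_add]
  have hoeffding := HasSubgaussianMGF.measure_sum_ge_le_of_iIndepFun (μ := hx.sampleMeasure t)
    (c := fun _ => 1) (s := univ) (iIndepFun_pi (X := fun _ i => f i - ∑ k, x k * f k)
      fun _ => (Measurable.of_discrete).aemeasurable)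
    (fun s _ => hx.hasSubgaussianMGF_sample_sub_sum_mul hf s) (by positivity : 0 ≤ (t : ℝ) * ε)
  rw [hset]
  convert hoeffding using 2
  simp only [sum_const, card_univ, Fintype.card_fin, nsmul_eq_mul, mul_one, NNReal.coe_natCast]
  field_simp

lemma sampleMeasure_real_lt_abs_sum_empDist_sub (hx : IsMixed n x) {t : ℕ} (ht : 0 < t)
    {f : Fin n → ℝ} (hf : ∀ i, |f i| ≤ 1) {ε : ℝ} (hε : 0 ≤ ε) :
    (hx.sampleMeasure t).real {A | ε < |∑ i, empDist n t A i * f i - ∑ i, x i * f i|}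
      ≤ 2 * Real.exp (-(t * ε ^ 2) / 2) := by
  have hneg : ∀ i, |(-f) i| ≤ 1 := fun i => (abs_neg (f i)).trans_le (hf i)
  calc _ ≤ (hx.sampleMeasure t).real
        ({A | ε ≤ ∑ i, empDist n t A i * f i - ∑ i, x i * f i} ∪
          {A | ε ≤ ∑ i, empDist n t A i * (-f) i - ∑ i, x i * (-f) i}) := by
        refine measureReal_mono fun A hA => ?_
        simp only [Set.mem_ofPred_eq, Set.mem_union, Pi.neg_apply, mul_neg,
          Finset.sum_neg_distrib] at hA ⊢
        rcases lt_abs.mp hA with h | h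
        · exact Or.inl h.le
        · exact Or.inr (by linarith)
    _ ≤ _ := (measureReal_union_le _ _).trans (by
        linarith [hx.sampleMeasure_real_le_sum_empDist_sub ht hf hε,
          hx.sampleMeasure_real_le_sum_empDist_sub ht hneg hε])

lemma one_sub_le_sampleMeasure_real_forall_abs_le (hx : IsMixed n x) {t : ℕ} (ht : 0 < t)
    {ι : Type*} [Fintype ι] {g : ι → Fin n → ℝ} (hg : ∀ j i, |g j i| ≤ 1) {ε : ℝ} (hε : 0 ≤ ε) :
    1 - Fintype.card ι * (2 * Real.exp (-(t * ε ^ 2) / 2)) ≤ (hx.sampleMeasure t).real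
      {A | ∀ j, |∑ i, empDist n t A i * g j i - ∑ i, x i * g j i| ≤ ε} := by
  have hcompl : {A : Fin t → Fin n | ∀ j, |∑ i, empDist n t A i * g j i - ∑ i, x i * g j i| ≤ ε}ᶜ
      = ⋃ j, {A | ε < |∑ i, empDist n t A i * g j i - ∑ i, x i * g j i|} := by
    ext A
    simp
  have hbad := (measureReal_iUnion_fintype_le (μ := hx.sampleMeasure t) _).trans
    (Finset.sum_le_sum fun j _ => hx.sampleMeasure_real_lt_abs_sum_empDist_sub ht (hg j) hε)
  rw [← hcompl, probReal_compl_eq_one_sub .of_discrete, Finset.sum_const, Finset.card_univ,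
    nsmul_eq_mul] at hbad
  linarith

lemma sampleMeasure_real_le_card_mul (hx : IsMixed n x) {t : ℕ} {b : ℝ} (hxb : ∀ i, x i ≤ b)
    (S : Finset (Fin t → Fin n)) : (hx.sampleMeasure t).real S ≤ #S * b ^ t := by
  rw [← sum_measureReal_singleton, ← nsmul_eq_mul]
  refine Finset.sum_le_card_nsmul _ _ _ fun A _ => ?_
  rw [sampleMeasure_real_singleton]
  calc ∏ s, x (A s) ≤ ∏ _s : Fin t, b :=
        Finset.prod_le_prod (fun s _ => hx.1 _) (fun s _ => hxb _)
    _ = b ^ t := by simp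

lemma one_sub_mul_pow_le_card_filter_forall_abs_le (hx : IsMixed n x) {t : ℕ} (ht : 0 < t)
    {m : ℝ} (hm : 0 < m) (hxm : ∀ i, x i ≤ 1 / m) {k : ℕ}
    {g : Fin k → Fin n → ℝ} (hg : ∀ j i, |g j i| ≤ 1) {ε : ℝ} (hε : 0 ≤ ε) :
    (1 - k * (2 * Real.exp (-(t * ε ^ 2) / 2))) * m ^ t ≤
      ((univ.filter fun A : Fin t → Fin n =>
        ∀ j, |∑ i, empDist n t A i * g j i - ∑ i, x i * g j i| ≤ ε).card : ℝ) := by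
  set S := univ.filter fun A : Fin t → Fin n =>
    ∀ j, |∑ i, empDist n t A i * g j i - ∑ i, x i * g j i| ≤ ε
  have hprob := hx.one_sub_le_sampleMeasure_real_forall_abs_le ht hg hε
  rw [Fintype.card_fin] at hprob
  have hcard := hx.sampleMeasure_real_le_card_mul hxm S
  rw [Finset.coe_filter_univ] at hcard
  calc _ ≤ #S * (1 / m) ^ t * m ^ t := by gcongr; linarith
    _ = #S := by rw [mul_assoc, ← mul_pow, one_div_mul_cancel hm.ne', one_pow, mul_one]

end IsMixed

lemma natCast_mul_two_mul_exp_le_two_div {n t : ℕ} (hn : 0 < n) {ε : ℝ} (hε : 0 < ε)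
    (hts : 16 * Real.log n / ε ^ 2 ≤ t) :
    n * (2 * Real.exp (-(t * (ε / 2) ^ 2) / 2)) ≤ 2 / n := by
  have hn' : (0 : ℝ) < n := by exact_mod_cast hn
  have hlog : 2 * Real.log n ≤ t * (ε / 2) ^ 2 / 2 := by
    rw [div_le_iff₀ (by positivity)] at hts
    linarith
  calc _ ≤ n * (2 * Real.exp (-(2 * Real.log n))) := by gcongr; linarith
    _ = 2 / n := by
      rw [Real.exp_neg, ← Real.log_rpow hn', Real.exp_log (by positivity), Real.rpow_two]
      field_simp

theorem stmt4_general (δ ε : ℝ) (hδ : 0 < δ) (hε : 0 < ε)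
    (n t : ℕ) (hn : 2 ≤ n) (ht : 0 < t)
    (R C : Matrix (Fin n) (Fin n) ℝ)
    (hR : ∀ i j, R i j ∈ Set.Icc (-1 : ℝ) 1) (hC : ∀ i j, C i j ∈ Set.Icc (-1 : ℝ) 1)
    (x y : Fin n → ℝ) (hx : IsMixed n x) (hy : IsMixed n y)
    (hxsmall : ∀ i, x i ≤ 1 / (δ * n)) (hysmall : ∀ j, y j ≤ 1 / (δ * n))
    (hts : 16 * Real.log n / ε ^ 2 ≤ t) :
    (1 - 4 / (n : ℝ)) * (δ * n) ^ t ≤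
      ((univ.filter fun A : Fin t → Fin n =>
          ∀ j, |∑ i, empDist n t A i * C i j - ∑ i, x i * C i j| ≤ ε / 2).card : ℝ) ∧
    (1 - 4 / (n : ℝ)) * (δ * n) ^ t ≤
      ((univ.filter fun B : Fin t → Fin n =>
          ∀ i, |∑ j, R i j * empDist n t B j - ∑ j, R i j * y j| ≤ ε / 2).card : ℝ) := by
  have hδn : 0 < δ * n := by positivity
  have hlower : (1 - 4 / (n : ℝ)) * (δ * n) ^ t ≤
      (1 - n * (2 * Real.exp (-(t * (ε / 2) ^ 2) / 2))) * (δ * n) ^ t := by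
    have hexp := natCast_mul_two_mul_exp_le_two_div (by omega) hε hts
    have : 2 / (n : ℝ) ≤ 4 / n := by gcongr; norm_num
    gcongr
    linarith
  exact ⟨hlower.trans <| hx.one_sub_mul_pow_le_card_filter_forall_abs_le ht hδn hxsmall
      (g := fun j i => C i j) (fun j i => abs_le.mpr (hC i j)) (half_pos hε).le,
    hlower.trans <| by
      simpa only [mul_comm (R _ _)] using
        hy.one_sub_mul_pow_le_card_filter_forall_abs_le ht hδn hysmall (g := R)
          (fun i j => abs_le.mpr (hR i j)) (half_pos hε).le⟩

/-- In a game of `δ`-small probabilities, the sets of "good" ordered `t`-tuples (those whose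
empirical distributions give payoff vectors `ε/2`-close to those of the small-probability Nash
equilibrium) have cardinality at least `(1 − 4/n)·(δn)^t`. -/
theorem stmt4 (δ ε : ℝ) (hδ : 0 < δ) (hδ1 : δ ≤ 1) (hε : 0 < ε)
    (n t : ℕ) (hn : 2 ≤ n) (ht : 0 < t)
    (R C : Matrix (Fin n) (Fin n) ℝ)
    (hR : ∀ i j, R i j ∈ Set.Icc (-1 : ℝ) 1) (hC : ∀ i j, C i j ∈ Set.Icc (-1 : ℝ) 1)
    (x y : Fin n → ℝ) (hx : IsMixed n x) (hy : IsMixed n y)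
    (hxy : IsNash n R C x y)
    (hxsmall : ∀ i, x i ≤ 1 / (δ * n)) (hysmall : ∀ j, y j ≤ 1 / (δ * n))
    (hts : 16 * Real.log n / ε ^ 2 ≤ t) :
    (1 - 4 / (n : ℝ)) * (δ * n) ^ t ≤
      ((univ.filter fun A : Fin t → Fin n =>
          ∀ j, |∑ i, empDist n t A i * C i j - ∑ i, x i * C i j| ≤ ε / 2).card : ℝ) ∧
    (1 - 4 / (n : ℝ)) * (δ * n) ^ t ≤
      ((univ.filter fun B : Fin t → Fin n =>
          ∀ i, |∑ j, R i j * empDist n t B j - ∑ j, R i j * y j| ≤ ε / 2).card : ℝ) :=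
  stmt4_general δ ε hδ hε n t hn ht R C hR hC x y hx hy hxsmall hysmall hts
end

section
/- Let ℓ be an even positive integer, let n = C(ℓ, ℓ/2) (the binomial coefficient), let S ⊆ {1,…,n} with |S| = ℓ, and let S_1, …, S_n be a bijective enumeration of all subsets of S of cardinality ℓ/2. Define the n×n bimatrix game G_S = (R,C) by: for every column j, R_{ij} = −1 and C_{ij} = 1 for all i ∉ S; R_{ij} = 1 and C_{ij} = 0 for all i ∈ S_j; and R_{ij} = 0 and C_{ij} = 1 for all i ∈ S∖S_j. Then for every ε with 0 ≤ ε < 1 and every ε-well-supported Nash equilibrium (x,y) of G_S: (1) x_i = 0 for all i ∉ S; (2) Σ_{i=1}^n |x_i − (u_S)_i| ≤ 8ε, where u_S is the uniform distribution on S, i.e., (u_S)_i = 1/ℓ for i ∈ S and (u_S)_i = 0 otherwise. -/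
open Finset

/-!
Rows in `S` earn at least `0` and rows outside `S` earn `-1`, while the row payoffs on `S` add
up to `ℓ/2`; so some row earns at least `1/2`, and `x` lives on `S`. The row player's expected
payoff `∑ⱼ yⱼ x(Sⱼ)` is then at least `1/2 - ε`, since every played row is `ε`-close to the best;
and every played column `j` is `ε`-close to the column whose half is `T`, so
`x(Sⱼ) ≤ x(T) + ε`. Hence every half `T` of `S` has `x(T) ≥ 1/2 - 2ε`, and by complement
`x(T) ≤ 1/2 + 2ε`.

Split `S` into its heavier half `T` and lighter half `U` at `t = min_T x`. By the triangle
inequality through `t`, `∑ |xᵢ - 1/ℓ| ≤ x(T) - x(U) + ℓ |t - 1/ℓ|`, and both terms are at most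
`4ε` because `(ℓ/2) t` lies between `x(U)` and `x(T)`.
-/

namespace Finset

variable {ι : Type*}

theorem exists_subset_card_eq_forall_sdiff_le [DecidableEq ι] (x : ι → ℝ) (S : Finset ι)
    {k : ℕ} (hk : k ≤ #S) : ∃ T ⊆ S, #T = k ∧ ∀ a ∈ T, ∀ b ∈ S \ T, x b ≤ x a := by
  induction k with
  | zero => exact ⟨∅, empty_subset S, card_empty, by simp⟩
  | succ k ih =>
    obtain ⟨T, hTS, hTk, hT⟩ := ih (Nat.le_of_succ_le hk)
    have hne : (S \ T).Nonempty := by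
      rw [← card_pos, card_sdiff_of_subset hTS]
      omega
    obtain ⟨a, ha, hmax⟩ := exists_max_image (S \ T) x hne
    rw [mem_sdiff] at ha
    refine ⟨insert a T, insert_subset ha.1 hTS, by rw [card_insert_of_notMem ha.2, hTk], ?_⟩
    intro c hc b hb
    have hb' : b ∈ S \ T := by
      simp only [mem_sdiff, mem_insert, not_or] at hb ⊢
      exact ⟨hb.1, hb.2.2⟩
    rcases mem_insert.1 hc with rfl | hcT
    · exact hmax b hb'
    · exact hT c hcT b hb'

theorem sum_abs_sub_add_sum_abs_sub_le (T U : Finset ι) (x : ι → ℝ) {t : ℝ}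
    (hT : ∀ i ∈ T, t ≤ x i) (hU : ∀ i ∈ U, x i ≤ t) (c : ℝ) :
    ∑ i ∈ T, |x i - c| + ∑ i ∈ U, |x i - c| ≤
      ∑ i ∈ T, (x i - t) + ∑ i ∈ U, (t - x i) + (#T + #U) * |t - c| := by
  have hT' : ∑ i ∈ T, |x i - c| ≤ ∑ i ∈ T, ((x i - t) + |t - c|) :=
    sum_le_sum fun i hi => by
      rw [← abs_of_nonneg (sub_nonneg.2 (hT i hi))]
      exact abs_sub_le _ _ _
  have hU' : ∑ i ∈ U, |x i - c| ≤ ∑ i ∈ U, ((t - x i) + |t - c|) :=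
    sum_le_sum fun i hi => by
      rw [← abs_of_nonneg (sub_nonneg.2 (hU i hi)), abs_sub_comm t]
      exact abs_sub_le _ _ _
  simp only [sum_add_distrib, sum_const, nsmul_eq_mul] at hT' hU'
  linarith

theorem sum_abs_sub_inv_card_le_of_forall_card_eq_half [DecidableEq ι] {S : Finset ι} {m : ℕ}
    (hS : #S = 2 * m) {x : ι → ℝ} (hx : ∑ i ∈ S, x i = 1) {δ : ℝ}
    (hhalf : ∀ T ⊆ S, #T = m → 1 / 2 - δ ≤ ∑ i ∈ T, x i) :
    ∑ i ∈ S, |x i - 1 / #S| ≤ 4 * δ := by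
  have hm : m ≠ 0 := by
    rintro rfl
    rw [card_eq_zero.1 hS, sum_empty] at hx
    exact zero_ne_one hx
  obtain ⟨T, hTS, hTm, htop⟩ := exists_subset_card_eq_forall_sdiff_le x S (k := m) (by omega)
  have hUm : #(S \ T) = m := by rw [card_sdiff_of_subset hTS]; omega
  have hsplit := sum_sdiff hTS (f := x)
  have hT := hhalf T hTS hTm
  have hU := hhalf (S \ T) sdiff_subset hUm
  obtain ⟨a, haT, hamin⟩ := exists_min_image T x (card_pos.1 (by omega))
  have hU_le : ∀ i ∈ S \ T, x i ≤ x a := fun i hi => htop a haT i hi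
  have hTt : #T • x a ≤ ∑ i ∈ T, x i := card_nsmul_le_sum T x (x a) hamin
  have hUt : ∑ i ∈ S \ T, x i ≤ #(S \ T) • x a := sum_le_card_nsmul _ x (x a) hU_le
  rw [hTm, nsmul_eq_mul] at hTt
  rw [hUm, nsmul_eq_mul] at hUt
  have hmR : (0 : ℝ) < m := by exact_mod_cast Nat.pos_of_ne_zero hm
  have hdist : (m + m : ℝ) * |x a - 1 / #S| ≤ 2 * δ := by
    have h2m : (0 : ℝ) < m + m := by positivity
    rw [← abs_of_pos h2m, ← abs_mul, hS, abs_le]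
    push_cast
    constructor <;> field_simp <;> linarith
  calc ∑ i ∈ S, |x i - 1 / #S|
      = ∑ i ∈ T, |x i - 1 / #S| + ∑ i ∈ S \ T, |x i - 1 / #S| := by
        rw [add_comm, sum_sdiff hTS]
    _ ≤ ∑ i ∈ T, (x i - x a) + ∑ i ∈ S \ T, (x a - x i) + (#T + #(S \ T)) * |x a - 1 / #S| :=
        sum_abs_sub_add_sum_abs_sub_le T (S \ T) x hamin hU_le _
    _ ≤ 4 * δ := by
        simp only [sum_sub_distrib, sum_const, hTm, hUm, nsmul_eq_mul]
        linarith

end Finset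

theorem IsMixed.le_sum_mul {n : ℕ} {x p : Fin n → ℝ} {a : ℝ} (hx : IsMixed n x)
    (h : ∀ i, 0 < x i → a ≤ p i) : a ≤ ∑ i, x i * p i := by
  calc a = ∑ i, x i * a := by rw [← sum_mul, hx.2, one_mul]
    _ ≤ ∑ i, x i * p i := sum_le_sum fun i _ => by
      rcases (hx.1 i).eq_or_lt with hxi | hxi
      · simp [← hxi]
      · exact mul_le_mul_of_nonneg_left (h i hxi) hxi.le

theorem IsMixed.sum_mul_le {n : ℕ} {x p : Fin n → ℝ} {b : ℝ} (hx : IsMixed n x)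
    (h : ∀ i, 0 < x i → p i ≤ b) : ∑ i, x i * p i ≤ b := by
  have := hx.le_sum_mul (p := fun i => - p i) (a := -b) fun i hi => neg_le_neg (h i hi)
  simpa only [mul_neg, sum_neg_distrib, neg_le_neg_iff] using this

section SubsetGame

variable {n m : ℕ} {S : Finset (Fin n)} {Ssub : Fin n → Finset (Fin n)}
  {R C : Matrix (Fin n) (Fin n) ℝ} {x y : Fin n → ℝ} {ε : ℝ}

theorem row_payoff_of_notMem
    (hR : ∀ i j, R i j = if i ∉ S then (-1 : ℝ) else if i ∈ Ssub j then 1 else 0)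
    (hy : IsMixed n y) {i : Fin n} (hi : i ∉ S) : ∑ j, R i j * y j = -1 := by
  simp only [hR, if_pos hi, neg_one_mul, sum_neg_distrib, hy.2]

theorem row_payoff_of_mem
    (hR : ∀ i j, R i j = if i ∉ S then (-1 : ℝ) else if i ∈ Ssub j then 1 else 0)
    {i : Fin n} (hi : i ∈ S) : ∑ j, R i j * y j = ∑ j with i ∈ Ssub j, y j := by
  rw [sum_filter]
  refine sum_congr rfl fun j _ => ?_
  by_cases hij : i ∈ Ssub j <;> simp [hR, hi, hij]

theorem sum_row_payoff
    (hR : ∀ i j, R i j = if i ∉ S then (-1 : ℝ) else if i ∈ Ssub j then 1 else 0)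
    (hsub : ∀ j, Ssub j ⊆ S) (hcard : ∀ j, #(Ssub j) = m) (hy : IsMixed n y) :
    ∑ i ∈ S, ∑ j, R i j * y j = m := by
  calc ∑ i ∈ S, ∑ j, R i j * y j = ∑ i ∈ S, ∑ j, if i ∈ Ssub j then y j else 0 :=
        sum_congr rfl fun i hi => by rw [row_payoff_of_mem hR hi, sum_filter]
    _ = ∑ j, #(Ssub j) * y j := by
        rw [sum_comm]
        refine sum_congr rfl fun j _ => ?_
        rw [sum_ite_mem, inter_eq_right.2 (hsub j), sum_const, nsmul_eq_mul]
    _ = m := by simp only [hcard, ← mul_sum, hy.2, mul_one]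

theorem exists_row_payoff_ge_half
    (hR : ∀ i j, R i j = if i ∉ S then (-1 : ℝ) else if i ∈ Ssub j then 1 else 0)
    (hsub : ∀ j, Ssub j ⊆ S) (hcard : ∀ j, #(Ssub j) = m) (hS : #S = 2 * m) (hm : 0 < m)
    (hy : IsMixed n y) : ∃ i ∈ S, 1 / 2 ≤ ∑ j, R i j * y j := by
  refine exists_le_of_sum_le (card_pos.1 (by omega)) ?_
  rw [sum_row_payoff hR hsub hcard hy, sum_const, hS, nsmul_eq_mul]
  push_cast
  linarith

theorem eq_zero_of_notMem_of_isWSNE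
    (hR : ∀ i j, R i j = if i ∉ S then (-1 : ℝ) else if i ∈ Ssub j then 1 else 0)
    (hSne : S.Nonempty) (hε : ε < 1) (hy : IsMixed n y) (hx : IsMixed n x)
    (hxy : IsWSNE n R C ε x y) {i : Fin n} (hi : i ∉ S) : x i = 0 := by
  obtain ⟨i₀, hi₀⟩ := hSne
  refine ((hx.1 i).eq_or_lt.resolve_right fun hxi => ?_).symm
  have hbest := hxy.1 i i₀ hxi
  have hi₀_nonneg : 0 ≤ ∑ j, R i₀ j * y j := by
    rw [row_payoff_of_mem hR hi₀]
    exact sum_nonneg fun j _ => hy.1 j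
  rw [row_payoff_of_notMem hR hy hi] at hbest
  linarith

theorem column_payoff
    (hC : ∀ i j, C i j = if i ∉ S then (1 : ℝ) else if i ∈ Ssub j then 0 else 1)
    (hsub : ∀ j, Ssub j ⊆ S) (hx : IsMixed n x) (j : Fin n) :
    ∑ i, x i * C i j = 1 - ∑ i ∈ Ssub j, x i := by
  have hterm : ∀ i, x i * C i j = x i - if i ∈ Ssub j then x i else 0 := by
    intro i
    by_cases hi : i ∈ S
    · by_cases hij : i ∈ Ssub j <;> simp [hC, hi, hij]
    · have hij : i ∉ Ssub j := fun h => hi (hsub j h)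
      simp [hC, hi, hij]
  rw [sum_congr rfl fun i _ => hterm i, sum_sub_distrib, hx.2, sum_ite_mem, univ_inter]

theorem expected_row_payoff
    (hR : ∀ i j, R i j = if i ∉ S then (-1 : ℝ) else if i ∈ Ssub j then 1 else 0)
    (hsub : ∀ j, Ssub j ⊆ S) (hsupp : ∀ i ∉ S, x i = 0) :
    ∑ i, x i * ∑ j, R i j * y j = ∑ j, y j * ∑ i ∈ Ssub j, x i := by
  have hcol : ∀ j, ∑ i, x i * R i j = ∑ i ∈ Ssub j, x i := by
    intro j
    rw [← univ_inter (Ssub j), ← sum_ite_mem]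
    refine sum_congr rfl fun i _ => ?_
    by_cases hi : i ∈ S
    · by_cases hij : i ∈ Ssub j <;> simp [hR, hi, hij]
    · have hij : i ∉ Ssub j := fun h => hi (hsub j h)
      simp [hsupp i hi, hij]
  calc ∑ i, x i * ∑ j, R i j * y j = ∑ j, y j * ∑ i, x i * R i j := by
        simp only [mul_sum]
        rw [sum_comm]
        exact sum_congr rfl fun j _ => sum_congr rfl fun i _ => by ring
    _ = ∑ j, y j * ∑ i ∈ Ssub j, x i := by simp only [hcol]

theorem half_mass_ge_of_isWSNE
    (hR : ∀ i j, R i j = if i ∉ S then (-1 : ℝ) else if i ∈ Ssub j then 1 else 0)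
    (hC : ∀ i j, C i j = if i ∉ S then (1 : ℝ) else if i ∈ Ssub j then 0 else 1)
    (hsub : ∀ j, Ssub j ⊆ S) (hcard : ∀ j, #(Ssub j) = m)
    (hsurj : ∀ T ⊆ S, #T = m → ∃ j, Ssub j = T) (hS : #S = 2 * m) (hm : 0 < m)
    (hε : ε < 1) (hx : IsMixed n x) (hy : IsMixed n y) (hxy : IsWSNE n R C ε x y)
    {T : Finset (Fin n)} (hTS : T ⊆ S) (hTm : #T = m) :
    1 / 2 - 2 * ε ≤ ∑ i ∈ T, x i := by
  obtain ⟨jT, rfl⟩ := hsurj T hTS hTm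
  obtain ⟨i₀, hi₀S, hi₀⟩ := exists_row_payoff_ge_half hR hsub hcard hS hm hy
  have hsupp : ∀ i ∉ S, x i = 0 := fun i hi =>
    eq_zero_of_notMem_of_isWSNE hR (card_pos.1 (by omega)) hε hy hx hxy hi
  have hlow : 1 / 2 - ε ≤ ∑ j, y j * ∑ i ∈ Ssub j, x i := by
    rw [← expected_row_payoff hR hsub hsupp]
    exact hx.le_sum_mul fun i hxi => by linarith [hxy.1 i i₀ hxi]
  have hup : ∑ j, y j * ∑ i ∈ Ssub j, x i ≤ ∑ i ∈ Ssub jT, x i + ε :=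
    hy.sum_mul_le fun j hyj => by
      have := hxy.2 j jT hyj
      rw [column_payoff hC hsub hx, column_payoff hC hsub hx] at this
      linarith
  linarith

end SubsetGame

theorem stmt5_general (ℓ : ℕ) (hℓ : 0 < ℓ) (hev : Even ℓ)
    (n : ℕ)
    (S : Finset (Fin n)) (hS : S.card = ℓ)
    (Ssub : Fin n → Finset (Fin n))
    (hsub : ∀ j, Ssub j ⊆ S) (hcard : ∀ j, (Ssub j).card = ℓ / 2)
    (hsurj : ∀ T : Finset (Fin n), T ⊆ S → T.card = ℓ / 2 → ∃ j, Ssub j = T)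
    (R C : Matrix (Fin n) (Fin n) ℝ)
    (hR : ∀ i j, R i j = if i ∉ S then (-1 : ℝ) else if i ∈ Ssub j then 1 else 0)
    (hC : ∀ i j, C i j = if i ∉ S then (1 : ℝ) else if i ∈ Ssub j then 0 else 1)
    (ε : ℝ) (hε1 : ε < 1)
    (x y : Fin n → ℝ) (hx : IsMixed n x) (hy : IsMixed n y)
    (hxy : IsWSNE n R C ε x y) :
    (∀ i, i ∉ S → x i = 0) ∧
    ∑ i, |x i - (if i ∈ S then (1 : ℝ) / ℓ else 0)| ≤ 8 * ε := by
  have hSm : #S = 2 * (ℓ / 2) := by rw [hS, Nat.two_mul_div_two_of_even hev]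
  have hm : 0 < ℓ / 2 := by omega
  have hsupp : ∀ i ∉ S, x i = 0 := fun i hi =>
    eq_zero_of_notMem_of_isWSNE hR (card_pos.1 (by omega)) hε1 hy hx hxy hi
  have hxS : ∑ i ∈ S, x i = 1 := by
    rw [sum_subset (subset_univ S) fun i _ hi => hsupp i hi, hx.2]
  refine ⟨hsupp, ?_⟩
  calc ∑ i, |x i - (if i ∈ S then (1 : ℝ) / ℓ else 0)| = ∑ i ∈ S, |x i - 1 / #S| := by
        rw [← sum_subset (subset_univ S) fun i _ hi => by simp [hi, hsupp i hi]]
        exact sum_congr rfl fun i hi => by rw [if_pos hi, hS]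
    _ ≤ 4 * (2 * ε) := sum_abs_sub_inv_card_le_of_forall_card_eq_half hSm hxS fun T hTS hTm =>
        half_mass_ge_of_isWSNE hR hC hsub hcard hsurj hSm hm hε1 hx hy hxy hTS hTm
    _ = 8 * ε := by ring

/-- In the Althöfer-style game `G_S`, in every `ε`-well-supported Nash equilibrium the row
player's strategy is supported on `S` and is `8ε`-close in `ℓ₁` distance to the uniform
distribution on `S`. -/
theorem stmt5 (ℓ : ℕ) (hℓ : 0 < ℓ) (hev : Even ℓ)
    (n : ℕ) (hn : n = Nat.choose ℓ (ℓ / 2))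
    (S : Finset (Fin n)) (hS : S.card = ℓ)
    (Ssub : Fin n → Finset (Fin n))
    (hsub : ∀ j, Ssub j ⊆ S) (hcard : ∀ j, (Ssub j).card = ℓ / 2)
    (hinj : Function.Injective Ssub)
    (hsurj : ∀ T : Finset (Fin n), T ⊆ S → T.card = ℓ / 2 → ∃ j, Ssub j = T)
    (R C : Matrix (Fin n) (Fin n) ℝ)
    (hR : ∀ i j, R i j = if i ∉ S then (-1 : ℝ) else if i ∈ Ssub j then 1 else 0)
    (hC : ∀ i j, C i j = if i ∉ S then (1 : ℝ) else if i ∈ Ssub j then 0 else 1)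
    (ε : ℝ) (hε0 : 0 ≤ ε) (hε1 : ε < 1)
    (x y : Fin n → ℝ) (hx : IsMixed n x) (hy : IsMixed n y)
    (hxy : IsWSNE n R C ε x y) :
    (∀ i, i ∉ S → x i = 0) ∧
    ∑ i, |x i - (if i ∈ S then (1 : ℝ) / ℓ else 0)| ≤ 8 * ε :=
  stmt5_general ℓ hℓ hev n S hS Ssub hsub hcard hsurj R C hR hC ε hε1 x y hx hy hxy
end

section
/- Let n be a positive integer, d ∈ {1,…,n}, and let p = (p_1,…,p_n), q = (q_1,…,q_n) ∈ [0,1]^n. Let X_1, …, X_n be independent random variables with X_i distributed as Bernoulli(p_i), and Y_1, …, Y_n independent with Y_i distributed as Bernoulli(q_i). Then the following two conditions are equivalent: (C_d) Σ_{i=1}^n p_i^ℓ = Σ_{i=1}^n q_i^ℓ for all ℓ = 1, …, d; (V_d) E[(Σ_{i=1}^n X_i)^ℓ] = E[(Σ_{i=1}^n Y_i)^ℓ] for all ℓ = 1, …, d. -/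
/-!
Both conditions are equivalent to the equality of the elementary symmetric functions
`e₁, …, e_d` of `p` and `q`. For power sums this is Newton's identities:
`p_ℓ = (-1)^(ℓ+1) ℓ e_ℓ + (terms in e_k, p_k with k < ℓ)`. For moments, the binomial moment
`E[(N choose k)]` of `N = ∑ Xᵢ` equals `e_k(p)` (count the `k`-subsets of the successes), and
`N^ℓ - ℓ! (N choose ℓ)` is a polynomial of degree `< ℓ` in `N`, so
`E[N^ℓ] = ℓ! e_ℓ + (terms in E[N^k] with k < ℓ)`. Both systems are triangular with nonzero
diagonal (`ℓ` resp. `ℓ!`, over `ℝ`), so agreement up to degree `d` transfers by induction.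
-/

open Finset

/-- The `ℓ`-th moment `E[(∑ Xᵢ)^ℓ]` of a sum of `n` independent Bernoulli random variables
with success probabilities `p 0, …, p (n-1)`. -/
noncomputable def sumBernMoment (n : ℕ) (p : Fin n → ℝ) (ℓ : ℕ) : ℝ :=
  ∑ S ∈ (Finset.univ : Finset (Fin n)).powerset,
    ((∏ i ∈ S, p i) * ∏ i ∈ Sᶜ, (1 - p i)) * (S.card : ℝ) ^ ℓ

section Triangular

variable {α β : Type*} {a a' : ℕ → α} {b b' : ℕ → β} {d : ℕ}

theorem forall_pos_le_eq_iff_forall_lt_succ_eq (h₀ : a 0 = a' 0) :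
    (∀ ℓ, 1 ≤ ℓ → ℓ ≤ d → a ℓ = a' ℓ) ↔ ∀ ℓ < d + 1, a ℓ = a' ℓ := by
  refine ⟨fun h ℓ hℓ => ?_, fun h ℓ _ hℓd => h ℓ (Nat.lt_succ_of_le hℓd)⟩
  rcases Nat.eq_zero_or_pos ℓ with rfl | hpos
  · exact h₀
  · exact h ℓ hpos (Nat.le_of_lt_succ hℓ)

theorem forall_pos_le_eq_iff_of_triangular (ha₀ : a 0 = a' 0) (hb₀ : b 0 = b' 0)
    (step : ∀ ℓ, 1 ≤ ℓ → ℓ ≤ d → (∀ k < ℓ, a k = a' k) → (∀ k < ℓ, b k = b' k) →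
      (a ℓ = a' ℓ ↔ b ℓ = b' ℓ)) :
    (∀ ℓ, 1 ≤ ℓ → ℓ ≤ d → a ℓ = a' ℓ) ↔ (∀ ℓ, 1 ≤ ℓ → ℓ ≤ d → b ℓ = b' ℓ) := by
  have key : ∀ m ≤ d + 1, (∀ k < m, a k = a' k) ↔ (∀ k < m, b k = b' k) := by
    intro m hm
    induction m with
    | zero => simp
    | succ m ih =>
      have ih := ih (by omega)
      have top : (∀ k < m, a k = a' k) → (∀ k < m, b k = b' k) → (a m = a' m ↔ b m = b' m) := by
        rcases Nat.eq_zero_or_pos m with rfl | hpos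
        · exact fun _ _ => iff_of_true ha₀ hb₀
        · exact step m hpos (by omega)
      simp only [Nat.forall_lt_succ_right]
      exact ⟨fun ⟨hA, ha⟩ => ⟨ih.1 hA, (top hA (ih.1 hA)).1 ha⟩,
        fun ⟨hB, hb⟩ => ⟨ih.2 hB, (top (ih.2 hB) hB).2 hb⟩⟩
  rw [forall_pos_le_eq_iff_forall_lt_succ_eq ha₀, forall_pos_le_eq_iff_forall_lt_succ_eq hb₀]
  exact key (d + 1) le_rfl

end Triangular

theorem eq_iff_eq_of_sub_mul_eq_sub_mul {R : Type*} [CommRing R] [NoZeroDivisors R]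
    {a a' b b' c : R} (hc : c ≠ 0) (h : b - c * a = b' - c * a') : a = a' ↔ b = b' := by
  rw [← sub_eq_zero, ← sub_eq_zero (a := b), show b - b' = c * (a - a') by linear_combination h,
    mul_eq_zero, or_iff_right hc]

section Newton

open MvPolynomial

variable {σ : Type*} [Fintype σ]

theorem sum_pow_sub_mul_eval_esymm {R : Type*} [CommRing R] (p : σ → R) {k : ℕ} (hk : 0 < k) :
    ∑ i, p i ^ k - (-1) ^ (k + 1) * k * eval p (esymm σ R k) =
      -∑ a ∈ antidiagonal k with a.1 ∈ Set.Ioo 0 k,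
        (-1) ^ a.1 * eval p (esymm σ R a.1) * ∑ i, p i ^ a.2 := by
  have := congrArg (eval p) (psum_eq_mul_esymm_sub_sum σ R k hk)
  simp only [psum, map_sum, map_sub, map_mul, map_pow, map_neg, map_one, map_natCast, eval_X]
    at this
  rw [this]
  ring

theorem forall_eval_esymm_eq_iff_forall_sum_pow_eq {K : Type*} [Field K] [CharZero K]
    (d : ℕ) (p q : σ → K) :
    (∀ ℓ, 1 ≤ ℓ → ℓ ≤ d → eval p (esymm σ K ℓ) = eval q (esymm σ K ℓ)) ↔
      (∀ ℓ, 1 ≤ ℓ → ℓ ≤ d → ∑ i, p i ^ ℓ = ∑ i, q i ^ ℓ) := by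
  refine forall_pos_le_eq_iff_of_triangular (by simp) (by simp) fun ℓ hℓ _ hesymm hpow => ?_
  refine eq_iff_eq_of_sub_mul_eq_sub_mul (c := (-1) ^ (ℓ + 1) * (ℓ : K)) (by simp; omega) ?_
  rw [sum_pow_sub_mul_eval_esymm p hℓ, sum_pow_sub_mul_eval_esymm q hℓ]
  congr 1
  refine sum_congr rfl fun a ha => ?_
  simp only [mem_filter, HasAntidiagonal.mem_antidiagonal, Set.mem_Ioo] at ha
  rw [hesymm a.1 (by omega), hpow a.2 (by omega)]

end Newton

section Bernoulli

open MvPolynomial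

variable {σ R : Type*} [Fintype σ] [DecidableEq σ] [CommRing R]

def bernoulliWeight (p : σ → R) (S : Finset σ) : R :=
  (∏ i ∈ S, p i) * ∏ i ∈ Sᶜ, (1 - p i)

theorem sum_bernoulliWeight_filter_superset (p : σ → R) (T : Finset σ) :
    ∑ S ∈ univ.powerset with T ⊆ S, bernoulliWeight p S = ∏ i ∈ T, p i := by
  -- `g` vanishes on `T`, so expanding `∏ (p i + g i)` keeps exactly the terms with `T ⊆ S`.
  set g : σ → R := fun i => if i ∈ T then 0 else 1 - p i
  have hg : ∀ S : Finset σ, ∏ i ∈ univ \ S, g i = if T ⊆ S then ∏ i ∈ Sᶜ, (1 - p i) else 0 := by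
    intro S
    rw [← compl_eq_univ_sdiff]
    split_ifs with hTS
    · exact prod_congr rfl fun i hi => if_neg fun hiT => mem_compl.1 hi (hTS hiT)
    · obtain ⟨i, hiT, hiS⟩ := not_subset.1 hTS
      exact prod_eq_zero (mem_compl.2 hiS) (if_pos hiT)
  calc ∑ S ∈ univ.powerset with T ⊆ S, bernoulliWeight p S
      = ∑ S ∈ univ.powerset, (∏ i ∈ S, p i) * ∏ i ∈ univ \ S, g i := by
        simp only [sum_filter, hg, mul_ite, mul_zero, bernoulliWeight]
    _ = ∏ i, (p i + g i) := (prod_add p g univ).symm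
    _ = ∏ i, if i ∈ T then p i else 1 :=
        Fintype.prod_congr _ _ fun i => by by_cases hi : i ∈ T <;> simp [g, hi]
    _ = ∏ i ∈ T, p i := Fintype.prod_ite_mem T p

theorem sum_bernoulliWeight (p : σ → R) : ∑ S ∈ univ.powerset, bernoulliWeight p S = 1 := by
  simpa using sum_bernoulliWeight_filter_superset p ∅

theorem sum_bernoulliWeight_mul_choose (p : σ → R) (k : ℕ) :
    ∑ S ∈ univ.powerset, bernoulliWeight p S * (#S).choose k = eval p (esymm σ R k) := by
  calc ∑ S ∈ univ.powerset, bernoulliWeight p S * (#S).choose k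
      = ∑ S ∈ univ.powerset, ∑ _T ∈ powersetCard k S, bernoulliWeight p S := by
        simp [card_powersetCard, mul_comm]
    _ = ∑ T ∈ powersetCard k univ, ∑ S ∈ univ.powerset with T ⊆ S, bernoulliWeight p S :=
        sum_comm' fun S T => by
          simp only [mem_powerset, mem_powersetCard, mem_filter, subset_univ, true_and, and_comm]
    _ = eval p (esymm σ R k) := by
        rw [sum_congr rfl fun T _ => sum_bernoulliWeight_filter_superset p T]
        simp [esymm]

end Bernoulli

theorem eval_X_pow_sub_descPochhammer {R : Type*} [CommRing R] [IsDomain R] {ℓ : ℕ} (hℓ : 0 < ℓ)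
    (x : R) : x ^ ℓ - (descPochhammer R ℓ).eval x =
      ∑ k ∈ range ℓ, (Polynomial.X ^ ℓ - descPochhammer R ℓ).coeff k * x ^ k := by
  have hdeg : (Polynomial.X ^ ℓ - descPochhammer R ℓ).natDegree < ℓ :=
    (Polynomial.isMonicOfDegree_X_pow R ℓ).natDegree_sub_lt hℓ.ne'
      ⟨descPochhammer_natDegree R ℓ, monic_descPochhammer R ℓ⟩
  simpa using Polynomial.eval_eq_sum_range' hdeg x

theorem sumBernMoment_eq_sum_bernoulliWeight (n : ℕ) (p : Fin n → ℝ) (ℓ : ℕ) :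
    sumBernMoment n p ℓ = ∑ S ∈ univ.powerset, bernoulliWeight p S * (#S : ℝ) ^ ℓ :=
  rfl

theorem sumBernMoment_zero (n : ℕ) (p : Fin n → ℝ) : sumBernMoment n p 0 = 1 := by
  simpa [sumBernMoment_eq_sum_bernoulliWeight] using sum_bernoulliWeight p

theorem sumBernMoment_sub_factorial_mul_eval_esymm (n : ℕ) (p : Fin n → ℝ) {ℓ : ℕ} (hℓ : 0 < ℓ) :
    sumBernMoment n p ℓ - ℓ.factorial * MvPolynomial.eval p (MvPolynomial.esymm (Fin n) ℝ ℓ) =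
      ∑ k ∈ range ℓ, (Polynomial.X ^ ℓ - descPochhammer ℝ ℓ).coeff k * sumBernMoment n p k := by
  have hdesc : ∀ m : ℕ, (ℓ.factorial : ℝ) * m.choose ℓ = (descPochhammer ℝ ℓ).eval (m : ℝ) := by
    intro m
    rw [descPochhammer_eval_eq_descFactorial, Nat.descFactorial_eq_factorial_mul_choose]
    push_cast; rfl
  simp only [sumBernMoment_eq_sum_bernoulliWeight, ← sum_bernoulliWeight_mul_choose, mul_sum]
  rw [← sum_sub_distrib, sum_comm]
  refine sum_congr rfl fun S _ => ?_
  rw [mul_left_comm, hdesc, ← mul_sub, eval_X_pow_sub_descPochhammer hℓ, mul_sum]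
  exact sum_congr rfl fun k _ => by ring

theorem forall_eval_esymm_eq_iff_forall_sumBernMoment_eq (n d : ℕ) (p q : Fin n → ℝ) :
    (∀ ℓ, 1 ≤ ℓ → ℓ ≤ d →
        MvPolynomial.eval p (MvPolynomial.esymm (Fin n) ℝ ℓ) =
          MvPolynomial.eval q (MvPolynomial.esymm (Fin n) ℝ ℓ)) ↔
      (∀ ℓ, 1 ≤ ℓ → ℓ ≤ d → sumBernMoment n p ℓ = sumBernMoment n q ℓ) := by
  refine forall_pos_le_eq_iff_of_triangular (by simp)
    ((sumBernMoment_zero n p).trans (sumBernMoment_zero n q).symm) fun ℓ hℓ _ _ hmoment => ?_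
  refine eq_iff_eq_of_sub_mul_eq_sub_mul (c := (ℓ.factorial : ℝ)) (by positivity) ?_
  rw [sumBernMoment_sub_factorial_mul_eval_esymm n p hℓ,
    sumBernMoment_sub_factorial_mul_eval_esymm n q hℓ]
  exact sum_congr rfl fun k hk => by rw [hmoment k (mem_range.1 hk)]

theorem stmt9_general (n : ℕ) (d : ℕ)
    (p q : Fin n → ℝ) :
    (∀ ℓ : ℕ, 1 ≤ ℓ → ℓ ≤ d → ∑ i, p i ^ ℓ = ∑ i, q i ^ ℓ) ↔
    (∀ ℓ : ℕ, 1 ≤ ℓ → ℓ ≤ d → sumBernMoment n p ℓ = sumBernMoment n q ℓ) :=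
  (forall_eval_esymm_eq_iff_forall_sum_pow_eq d p q).symm.trans
    (forall_eval_esymm_eq_iff_forall_sumBernMoment_eq n d p q)

/-- For sums of independent Bernoulli indicators, equality of the power sums of the
expectations up to degree `d` is equivalent to equality of the first `d` moments of the sums. -/
theorem stmt9 (n : ℕ) (hn : 0 < n) (d : ℕ) (hd1 : 1 ≤ d) (hdn : d ≤ n)
    (p q : Fin n → ℝ)
    (hp : ∀ i, p i ∈ Set.Icc (0 : ℝ) 1) (hq : ∀ i, q i ∈ Set.Icc (0 : ℝ) 1) :
    (∀ ℓ : ℕ, 1 ≤ ℓ → ℓ ≤ d → ∑ i, p i ^ ℓ = ∑ i, q i ^ ℓ) ↔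
    (∀ ℓ : ℕ, 1 ≤ ℓ → ℓ ≤ d → sumBernMoment n p ℓ = sumBernMoment n q ℓ) :=
  stmt9_general n d p q
end

section
/- Consider the anonymous game of the construction described in the context, determined by an integer k ≥ 1, a real δ > 0, and probabilities p_1, …, p_k ∈ [3δk, 1]. Then for every δ' with 0 ≤ δ' < δ and every δ'-Nash equilibrium (q_1,…,q_k, q_B, q_C) of this game: |q_i − p_i| ≤ 7δk² for every i ∈ {1,…,k}, and moreover q_B = 0 or q_C = 0. -/
/-!
If `B` and `C` both put positive weight on 1, their incentives force `∑ q - ∑ p` to be both at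
least and at most a positive multiple of `δk`. If `B` plays 1 surely then `C` does not, every
type-A player is pushed to 0, and `B`'s incentive fails; symmetrically for `C`. Hence both play
0 with positive probability, which pins `|∑ q - ∑ p| ≤ (2δ + δ')k`. When `qC = 0`, the
incentive of a type-A player with `q i > 0` gives `q i - p i ≤ ∑ (q - p) + δk` (and `p i ≥ 3δk`
gives it when `q i = 0`); summing this bound over the other players bounds `q i - p i` from
below as well, so `|q i - p i| ≤ (3δ + δ')k²`. The case `qB = 0 < qC` is the mirror image
with `p - q`.
-/

open Finset

/-- `(q, qB, qC)` is a `δ'`-Nash equilibrium of the anonymous game with `k` type-A players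
(with target probabilities `p`) and two extra players `B` and `C`, as constructed in the lower
bound for anonymous games. The expected payoffs are:
`U^B_1 = (∑ q − μ)/k`, `U^B_0 = 2δ`, `U^C_1 = (μ − ∑ q)/k`, `U^C_0 = 2δ`,
`U^i_0 = (μ₋ᵢ(1−qB)(1−qC) − δk·qC)/k`, `U^i_1 = ((∑_{j≠i} q_j)(1−qB)(1−qC) − δk·qB)/k`,
where `μ = ∑ p` and `μ₋ᵢ = ∑_{j≠i} p_j`. -/
def AnonNash (k : ℕ) (δ : ℝ) (p : Fin k → ℝ) (δ' : ℝ)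
    (q : Fin k → ℝ) (qB qC : ℝ) : Prop :=
  (0 < qB → (∑ i, q i - ∑ i, p i) / k ≥ 2 * δ - δ') ∧
  (qB < 1 → 2 * δ ≥ (∑ i, q i - ∑ i, p i) / k - δ') ∧
  (0 < qC → (∑ i, p i - ∑ i, q i) / k ≥ 2 * δ - δ') ∧
  (qC < 1 → 2 * δ ≥ (∑ i, p i - ∑ i, q i) / k - δ') ∧
  (∀ i : Fin k,
    (0 < q i →
      ((∑ j ∈ Finset.univ.erase i, q j) * (1 - qB) * (1 - qC) - δ * k * qB) / k ≥
      ((∑ j ∈ Finset.univ.erase i, p j) * (1 - qB) * (1 - qC) - δ * k * qC) / k - δ') ∧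
    (q i < 1 →
      ((∑ j ∈ Finset.univ.erase i, p j) * (1 - qB) * (1 - qC) - δ * k * qC) / k ≥
      ((∑ j ∈ Finset.univ.erase i, q j) * (1 - qB) * (1 - qC) - δ * k * qB) / k - δ'))

theorem sum_sub_mul_le_of_forall_ne_le {ι : Type*} [Fintype ι] [DecidableEq ι] {d : ι → ℝ}
    {b : ℝ} (j : ι) (h : ∀ i ≠ j, d i ≤ b) :
    ∑ i, d i - (Fintype.card ι - 1) * b ≤ d j := by
  have hcard : ((univ.erase j).card : ℝ) = Fintype.card ι - 1 := by
    rw [card_erase_of_mem (mem_univ j), card_univ, Nat.cast_pred (Fintype.card_pos_iff.2 ⟨j⟩)]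
  have hrest : ∑ i ∈ univ.erase j, d i ≤ (Fintype.card ι - 1) * b := by
    simpa only [nsmul_eq_mul, hcard] using
      sum_le_card_nsmul (univ.erase j) d b fun i hi => h i (ne_of_mem_erase hi)
  linarith [add_sum_erase univ d (mem_univ j)]

theorem abs_le_of_forall_le_sum_add {ι : Type*} [Fintype ι] {d : ι → ℝ} {a c : ℝ} (hc : 0 ≤ c)
    (hsum : |∑ i, d i| ≤ a) (hd : ∀ i, d i ≤ ∑ i, d i + c) (j : ι) :
    |d j| ≤ (a + c) * Fintype.card ι := by
  classical
  have hn : (1 : ℝ) ≤ Fintype.card ι := by exact_mod_cast Fintype.card_pos_iff.2 ⟨j⟩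
  have hlow := sum_sub_mul_le_of_forall_ne_le j fun i _ => hd i
  rw [abs_le] at hsum ⊢
  constructor
  · rcases le_total (Fintype.card ι : ℝ) 2 with h2 | h2 <;> nlinarith
  · nlinarith [hd j]

theorem le_add_mul_of_div_sub_le {a b d k : ℝ} (hk : 0 < k) (h : b / k - d ≤ a / k) :
    b ≤ a + d * k := by
  rwa [sub_le_iff_le_add, div_le_iff₀ hk, add_mul, div_mul_cancel₀ _ hk.ne'] at h

theorem neg_lt_of_mul_sub_le_mul_one_sub {x t c c' : ℝ} (ht : t < 1) (hc : c' < c)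
    (h : c * t - c' ≤ x * (1 - t)) : -c < x := by
  nlinarith

namespace AnonNash

variable {k : ℕ} {δ δ' : ℝ} {p q : Fin k → ℝ} {qB qC : ℝ}

variable (h : AnonNash k δ p δ' q qB qC) (hk : (0 : ℝ) < k)
include h hk

theorem le_sum_sub_sum_of_pos_qB (hB : 0 < qB) : (2 * δ - δ') * k ≤ ∑ i, q i - ∑ i, p i :=
  (le_div_iff₀ hk).1 (h.1 hB)

theorem sum_sub_sum_le_of_qB_lt_one (hB : qB < 1) : ∑ i, q i - ∑ i, p i ≤ (2 * δ + δ') * k :=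
  (div_le_iff₀ hk).1 (by linarith [h.2.1 hB])

theorem le_sum_sub_sum_of_pos_qC (hC : 0 < qC) : (2 * δ - δ') * k ≤ ∑ i, p i - ∑ i, q i :=
  (le_div_iff₀ hk).1 (h.2.2.1 hC)

theorem sum_sub_sum_le_of_qC_lt_one (hC : qC < 1) : ∑ i, p i - ∑ i, q i ≤ (2 * δ + δ') * k :=
  (div_le_iff₀ hk).1 (by linarith [h.2.2.2.1 hC])

theorem payoff_le_of_pos_q {i : Fin k} (hi : 0 < q i) :
    (∑ j, p j - p i) * (1 - qB) * (1 - qC) - δ * k * qC ≤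
      (∑ j, q j - q i) * (1 - qB) * (1 - qC) - δ * k * qB + δ' * k := by
  have := (h.2.2.2.2 i).1 hi
  rw [sum_erase_eq_sub (mem_univ i), sum_erase_eq_sub (mem_univ i)] at this
  exact le_add_mul_of_div_sub_le hk this

theorem payoff_le_of_q_lt_one {i : Fin k} (hi : q i < 1) :
    (∑ j, q j - q i) * (1 - qB) * (1 - qC) - δ * k * qB ≤
      (∑ j, p j - p i) * (1 - qB) * (1 - qC) - δ * k * qC + δ' * k := by
  have := (h.2.2.2.2 i).2 hi
  rw [sum_erase_eq_sub (mem_univ i), sum_erase_eq_sub (mem_univ i)] at this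
  exact le_add_mul_of_div_sub_le hk this

theorem qB_eq_zero_or_qC_eq_zero (hδ' : δ' < 2 * δ) (hqB : 0 ≤ qB) (hqC : 0 ≤ qC) :
    qB = 0 ∨ qC = 0 := by
  rcases hqB.eq_or_lt with hB | hB
  · exact .inl hB.symm
  rcases hqC.eq_or_lt with hC | hC
  · exact .inr hC.symm
  have hgap : 0 < (2 * δ - δ') * k := mul_pos (by linarith) hk
  linarith [h.le_sum_sub_sum_of_pos_qB hk hB, h.le_sum_sub_sum_of_pos_qC hk hC]

theorem qB_lt_one (hδ : 0 ≤ δ) (hδ' : δ' < δ) (hp : ∀ i, 0 ≤ p i) (hq : ∀ i, 0 ≤ q i)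
    (hqB : qB ≤ 1) (hqC : 0 ≤ qC) : qB < 1 := by
  refine hqB.lt_of_ne fun hB => ?_
  have hB0 : 0 < qB := by rw [hB]; exact one_pos
  have hC : qC = 0 :=
    (h.qB_eq_zero_or_qC_eq_zero hk (by linarith) hB0.le hqC).resolve_left hB0.ne'
  have hq0 : ∀ i, q i = 0 := fun i => (hq i).eq_or_lt.elim Eq.symm fun hi => by
    have := h.payoff_le_of_pos_q hk hi
    rw [hB, hC] at this
    nlinarith
  have hgap := h.le_sum_sub_sum_of_pos_qB hk hB0
  simp only [hq0, sum_const_zero] at hgap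
  nlinarith [sum_nonneg fun i (_ : i ∈ univ) => hp i]

theorem qC_lt_one (hδ : 0 ≤ δ) (hδ' : δ' < δ) (hp : ∀ i, p i ≤ 1) (hq : ∀ i, q i ≤ 1)
    (hqB : 0 ≤ qB) (hqC : qC ≤ 1) : qC < 1 := by
  refine hqC.lt_of_ne fun hC => ?_
  have hC0 : 0 < qC := by rw [hC]; exact one_pos
  have hB : qB = 0 :=
    (h.qB_eq_zero_or_qC_eq_zero hk (by linarith) hqB hC0.le).resolve_right hC0.ne'
  have hq1 : ∀ i, q i = 1 := fun i => (hq i).lt_or_eq.elim (fun hi => by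
    have := h.payoff_le_of_q_lt_one hk hi
    rw [hB, hC] at this
    nlinarith) id
  have hgap := h.le_sum_sub_sum_of_pos_qC hk hC0
  simp only [hq1, sum_const, card_univ, Fintype.card_fin, nsmul_eq_mul, mul_one] at hgap
  have hμ : ∑ i, p i ≤ k := by simpa using sum_le_card_nsmul univ p 1 fun i _ => hp i
  nlinarith

theorem abs_sum_sub_sum_le (hB : qB < 1) (hC : qC < 1) :
    |∑ i, q i - ∑ i, p i| ≤ (2 * δ + δ') * k :=
  abs_sub_le_iff.2 ⟨h.sum_sub_sum_le_of_qB_lt_one hk hB, h.sum_sub_sum_le_of_qC_lt_one hk hC⟩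

theorem sub_le_sum_sub_sum_add_of_qC_eq_zero (hδ : 0 ≤ δ) (hδ' : δ' < δ)
    (hp : ∀ i, 3 * δ * k ≤ p i) (hq : ∀ i, 0 ≤ q i) (hB : qB < 1) (hC : qC = 0) (i : Fin k) :
    q i - p i ≤ ∑ j, q j - ∑ j, p j + δ * k := by
  rcases (hq i).eq_or_lt with hi | hi
  · have := h.sum_sub_sum_le_of_qC_lt_one hk (hC ▸ zero_lt_one)
    rw [← hi]
    nlinarith [hp i, mul_lt_mul_of_pos_right hδ' hk]
  · have := h.payoff_le_of_pos_q hk hi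
    rw [hC] at this
    have := neg_lt_of_mul_sub_le_mul_one_sub (x := (∑ j, q j - q i) - (∑ j, p j - p i)) hB
      (mul_lt_mul_of_pos_right hδ' hk) (by linear_combination this)
    linarith

theorem sub_le_sum_sub_sum_add_of_pos_qC (hδ : 0 ≤ δ) (hδ' : δ' < δ) (hp : ∀ i, p i ≤ 1)
    (hq : ∀ i, q i ≤ 1) (hB : qB = 0) (hC0 : 0 < qC) (hC : qC < 1) (i : Fin k) :
    p i - q i ≤ ∑ j, p j - ∑ j, q j + δ * k := by
  rcases (hq i).lt_or_eq with hi | hi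
  · have := h.payoff_le_of_q_lt_one hk hi
    rw [hB] at this
    have := neg_lt_of_mul_sub_le_mul_one_sub (x := (∑ j, p j - p i) - (∑ j, q j - q i)) hC
      (mul_lt_mul_of_pos_right hδ' hk) (by linear_combination this)
    linarith
  · have := h.le_sum_sub_sum_of_pos_qC hk hC0
    rw [hi]
    nlinarith [hp i, mul_lt_mul_of_pos_right hδ' hk]

end AnonNash

theorem stmt13_general (k : ℕ) (hk : 1 ≤ k) (δ : ℝ) (hδ : 0 < δ)
    (p : Fin k → ℝ) (hp : ∀ i, 3 * δ * k ≤ p i ∧ p i ≤ 1)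
    (δ' : ℝ) (hδ' : δ' < δ)
    (q : Fin k → ℝ) (qB qC : ℝ)
    (hq : ∀ i, q i ∈ Set.Icc (0 : ℝ) 1)
    (hqB : qB ∈ Set.Icc (0 : ℝ) 1) (hqC : qC ∈ Set.Icc (0 : ℝ) 1)
    (hNash : AnonNash k δ p δ' q qB qC) :
    (∀ i, |q i - p i| ≤ 7 * δ * k ^ 2) ∧ (qB = 0 ∨ qC = 0) := by
  have hkpos : (0 : ℝ) < k := by exact_mod_cast hk
  have hδk : 0 ≤ δ * k := by positivity
  have hp0 : ∀ i, 0 ≤ p i := fun i => le_trans (by positivity) (hp i).1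
  have hB1 := hNash.qB_lt_one hkpos hδ.le hδ' hp0 (fun i => (hq i).1) hqB.2 hqC.1
  have hC1 := hNash.qC_lt_one hkpos hδ.le hδ' (fun i => (hp i).2) (fun i => (hq i).2) hqB.1 hqC.2
  have hsum := hNash.abs_sum_sub_sum_le hkpos hB1 hC1
  have hBC := hNash.qB_eq_zero_or_qC_eq_zero hkpos (by linarith) hqB.1 hqC.1
  have hk2 : ((2 * δ + δ') * k + δ * k) * k ≤ 7 * δ * k ^ 2 := by nlinarith
  refine ⟨fun i => le_trans ?_ hk2, hBC⟩
  rcases hqC.1.eq_or_lt with hC | hC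
  · have hd := hNash.sub_le_sum_sub_sum_add_of_qC_eq_zero hkpos hδ.le hδ' (fun j => (hp j).1)
      (fun j => (hq j).1) hB1 hC.symm
    simp only [← sum_sub_distrib] at hsum hd
    simpa only [Fintype.card_fin] using abs_le_of_forall_le_sum_add hδk hsum hd i
  · have hd := hNash.sub_le_sum_sub_sum_add_of_pos_qC hkpos hδ.le hδ' (fun j => (hp j).2)
      (fun j => (hq j).2) (hBC.resolve_right hC.ne') hC hC1
    rw [abs_sub_comm] at hsum ⊢
    simp only [← sum_sub_distrib] at hsum hd
    simpa only [Fintype.card_fin] using abs_le_of_forall_le_sum_add hδk hsum hd i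

/-- In every δ′-Nash equilibrium of the constructed anonymous game (δ′ < δ), each type-A player i plays 1 with probability within 7δk² of p i, and at least one of B, C plays 1 with probability 0. -/
theorem stmt13 (k : ℕ) (hk : 1 ≤ k) (δ : ℝ) (hδ : 0 < δ)
    (p : Fin k → ℝ) (hp : ∀ i, 3 * δ * k ≤ p i ∧ p i ≤ 1)
    (δ' : ℝ) (hδ'0 : 0 ≤ δ') (hδ' : δ' < δ)
    (q : Fin k → ℝ) (qB qC : ℝ)
    (hq : ∀ i, q i ∈ Set.Icc (0 : ℝ) 1)
    (hqB : qB ∈ Set.Icc (0 : ℝ) 1) (hqC : qC ∈ Set.Icc (0 : ℝ) 1)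
    (hNash : AnonNash k δ p δ' q qB qC) :
    (∀ i, |q i - p i| ≤ 7 * δ * k ^ 2) ∧ (qB = 0 ∨ qC = 0) :=
  stmt13_general k hk δ hδ p hp δ' hδ' q qB qC hq hqB hqC hNash
end

section
/- Consider the anonymous game of the construction described in the context, determined by an integer k ≥ 1, a real δ > 0, and probabilities p_1, …, p_k ∈ [3δk, 1]. Then for every δ' with 0 ≤ δ' < δ and every δ'-Nash equilibrium (q_1,…,q_k, q_B, q_C) of this game: |Σ_{i=1}^k q_i − μ| ≤ 3δk, where μ = Σ_{i=1}^k p_i. -/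
/-!
If the type-A players overshoot, `∑ q - μ > 3δk`, then playing 1 beats playing 0 by more than
`δ'` for `B` and loses by more than `δ'` for `C`, so `qB = 1` and `qC = 0`. Against that profile
every type-A player gains `δ > δ'` by playing 0, so `∑ q = 0 ≤ μ`, a contradiction. The
undershooting case is the same argument after relabelling the strategies `0 ↔ 1` (replacing
`p, q` by `1 - p, 1 - q`) and exchanging `B` with `C`, which maps the game to itself.
-/

open Finset

lemma eq_one_of_best_response_gap {x u₀ u₁ ε : ℝ} (hx : x ≤ 1)
    (hbr : x < 1 → u₀ ≥ u₁ - ε) (hgap : u₀ < u₁ - ε) : x = 1 :=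
  hx.eq_of_not_lt fun hlt => (hbr hlt).not_gt hgap

lemma eq_zero_of_best_response_gap {x u₀ u₁ ε : ℝ} (hx : 0 ≤ x)
    (hbr : 0 < x → u₁ ≥ u₀ - ε) (hgap : u₁ < u₀ - ε) : x = 0 :=
  (hx.eq_of_not_lt fun hpos => (hbr hpos).not_gt hgap).symm

lemma sum_one_sub_sub_sum_one_sub {ι : Type*} (s : Finset ι) (p q : ι → ℝ) :
    ∑ i ∈ s, (1 - q i) - ∑ i ∈ s, (1 - p i) = ∑ i ∈ s, p i - ∑ i ∈ s, q i := by
  simp only [sum_sub_distrib]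
  ring

namespace AnonNash

variable {k : ℕ} {δ δ' qB qC : ℝ} {p q : Fin k → ℝ}

theorem swap (h : AnonNash k δ p δ' q qB qC) :
    AnonNash k δ (fun i => 1 - p i) δ' (fun i => 1 - q i) qC qB := by
  obtain ⟨hB₁, hB₀, hC₁, hC₀, hA⟩ := h
  simp only [AnonNash, sum_one_sub_sub_sum_one_sub]
  refine ⟨hC₁, hC₀, hB₁, hB₀, fun i => ?_⟩
  have hgain :
      ((∑ j ∈ univ.erase i, (1 - q j)) * (1 - qC) * (1 - qB) - δ * k * qC) / k -
        ((∑ j ∈ univ.erase i, (1 - p j)) * (1 - qC) * (1 - qB) - δ * k * qB) / k =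
      ((∑ j ∈ univ.erase i, p j) * (1 - qB) * (1 - qC) - δ * k * qC) / k -
        ((∑ j ∈ univ.erase i, q j) * (1 - qB) * (1 - qC) - δ * k * qB) / k := by
    simp only [sum_sub_distrib]
    ring
  exact ⟨fun hpos => by linarith [(hA i).2 (by linarith)],
    fun hlt => by linarith [(hA i).1 (by linarith)]⟩

theorem sum_sub_sum_le (hk : 0 < k) (hδ : 0 < δ) (hδ' : δ' < δ) (hp : ∀ i, 0 ≤ p i)
    (hq : ∀ i, 0 ≤ q i) (hqB : qB ≤ 1) (hqC : 0 ≤ qC) (h : AnonNash k δ p δ' q qB qC) :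
    ∑ i, q i - ∑ i, p i ≤ 3 * δ * k := by
  obtain ⟨-, hB₀, hC₁, -, hA⟩ := h
  have hk' : (0 : ℝ) < k := by exact_mod_cast hk
  by_contra! hexcess
  have hgain : 3 * δ < (∑ i, q i - ∑ i, p i) / k := by rwa [lt_div_iff₀ hk']
  have hloss : (∑ i, p i - ∑ i, q i) / k < -(3 * δ) := by
    rw [← neg_sub, neg_div]
    exact neg_lt_neg hgain
  have hB : qB = 1 := eq_one_of_best_response_gap hqB hB₀ (by linarith)
  have hC : qC = 0 := eq_zero_of_best_response_gap hqC hC₁ (by linarith)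
  have hA_zero : ∀ i, q i = 0 := fun i => by
    refine eq_zero_of_best_response_gap (hq i) (hA i).1 ?_
    simp only [hB, hC, sub_self, sub_zero, mul_zero, mul_one, zero_sub, zero_div,
      neg_div, mul_div_cancel_right₀ _ hk'.ne']
    linarith
  have hsum_q : ∑ i, q i = 0 := sum_eq_zero fun i _ => hA_zero i
  have hsum_p : 0 ≤ ∑ i, p i := sum_nonneg fun i _ => hp i
  have hbound : 0 ≤ 3 * δ * k := by positivity
  linarith

end AnonNash

theorem stmt14_general (k : ℕ) (hk : 1 ≤ k) (δ : ℝ) (hδ : 0 < δ)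
    (p : Fin k → ℝ) (hp : ∀ i, 3 * δ * k ≤ p i ∧ p i ≤ 1)
    (δ' : ℝ) (hδ' : δ' < δ)
    (q : Fin k → ℝ) (qB qC : ℝ)
    (hq : ∀ i, q i ∈ Set.Icc (0 : ℝ) 1)
    (hqB : qB ∈ Set.Icc (0 : ℝ) 1) (hqC : qC ∈ Set.Icc (0 : ℝ) 1)
    (hNash : AnonNash k δ p δ' q qB qC) :
    |∑ i, q i - ∑ i, p i| ≤ 3 * δ * k := by
  have hp_nonneg : ∀ i, 0 ≤ p i := fun i => le_trans (by positivity) (hp i).1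
  have hexcess := hNash.sum_sub_sum_le hk hδ hδ' hp_nonneg (fun i => (hq i).1) hqB.2 hqC.1
  have hdeficit := hNash.swap.sum_sub_sum_le hk hδ hδ' (fun i => sub_nonneg.2 (hp i).2)
    (fun i => sub_nonneg.2 (hq i).2) hqC.2 hqB.1
  rw [sum_one_sub_sub_sum_one_sub] at hdeficit
  exact abs_sub_le_iff.2 ⟨hexcess, hdeficit⟩

/-- In every δ′-Nash equilibrium of the constructed anonymous game (δ′ < δ), the total probability mass of the type-A players is within 3δk of μ = ∑ p. -/
theorem stmt14 (k : ℕ) (hk : 1 ≤ k) (δ : ℝ) (hδ : 0 < δ)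
    (p : Fin k → ℝ) (hp : ∀ i, 3 * δ * k ≤ p i ∧ p i ≤ 1)
    (δ' : ℝ) (hδ'0 : 0 ≤ δ') (hδ' : δ' < δ)
    (q : Fin k → ℝ) (qB qC : ℝ)
    (hq : ∀ i, q i ∈ Set.Icc (0 : ℝ) 1)
    (hqB : qB ∈ Set.Icc (0 : ℝ) 1) (hqC : qC ∈ Set.Icc (0 : ℝ) 1)
    (hNash : AnonNash k δ p δ' q qB qC) :
    |∑ i, q i - ∑ i, p i| ≤ 3 * δ * k :=
  stmt14_general k hk δ hδ p hp δ' hδ' q qB qC hq hqB hqC hNash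
end

section
/- Consider the anonymous game of the construction described in the context, determined by an integer k ≥ 1, a real δ > 0, and probabilities p_1, …, p_k ∈ [3δk, 1]. Then for every δ' with 0 ≤ δ' < δ and every δ'-Nash equilibrium (q_1,…,q_k, q_B, q_C) of this game: q_B = 0 or q_C = 0. -/
open Finset

theorem AnonNash.eq_zero_or_eq_zero {k : ℕ} {δ δ' : ℝ} {p q : Fin k → ℝ} {qB qC : ℝ}
    (hNash : AnonNash k δ p δ' q qB qC) (hδ' : δ' < 2 * δ) (hqB : 0 ≤ qB) (hqC : 0 ≤ qC) :
    qB = 0 ∨ qC = 0 := by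
  by_contra! h
  have hB := hNash.1 (hqB.lt_of_ne' h.1)
  have hC := hNash.2.2.1 (hqC.lt_of_ne' h.2)
  -- B's and C's payoffs for playing 1 are opposite, so they cannot both exceed `2δ - δ' > 0`.
  rw [← neg_sub, neg_div] at hC
  linarith

theorem stmt15_general (k : ℕ) (δ : ℝ) (hδ : 0 < δ)
    (p : Fin k → ℝ)
    (δ' : ℝ) (hδ' : δ' < δ)
    (q : Fin k → ℝ) (qB qC : ℝ)
    (hqB : qB ∈ Set.Icc (0 : ℝ) 1) (hqC : qC ∈ Set.Icc (0 : ℝ) 1)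
    (hNash : AnonNash k δ p δ' q qB qC) :
    qB = 0 ∨ qC = 0 :=
  hNash.eq_zero_or_eq_zero (by linarith) hqB.1 hqC.1

/-- In every δ′-Nash equilibrium of the constructed anonymous game (δ′ < δ), at least one of the players B and C plays strategy 1 with probability 0. -/
theorem stmt15 (k : ℕ) (hk : 1 ≤ k) (δ : ℝ) (hδ : 0 < δ)
    (p : Fin k → ℝ) (hp : ∀ i, 3 * δ * k ≤ p i ∧ p i ≤ 1)
    (δ' : ℝ) (hδ'0 : 0 ≤ δ') (hδ' : δ' < δ)
    (q : Fin k → ℝ) (qB qC : ℝ)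
    (hq : ∀ i, q i ∈ Set.Icc (0 : ℝ) 1)
    (hqB : qB ∈ Set.Icc (0 : ℝ) 1) (hqC : qC ∈ Set.Icc (0 : ℝ) 1)
    (hNash : AnonNash k δ p δ' q qB qC) :
    qB = 0 ∨ qC = 0 :=
  stmt15_general k δ hδ p δ' hδ' q qB qC hqB hqC hNash
end

section
/- Consider the anonymous game of the construction described in the context, determined by an integer k ≥ 1, a real δ > 0, and probabilities p_1, …, p_k ∈ [3δk, 1]. Then for every δ' with 0 ≤ δ' < δ and every δ'-Nash equilibrium (q_1,…,q_k, q_B, q_C) of this game, and every i ∈ {1,…,k}: |Σ_{j≠i} q_j − μ_{-i}| ≤ 4δk², where μ_{-i} = Σ_{j≠i} p_j. -/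
/-!
Write `D = ∑ (q j - p j)` and `D₋ᵢ = D - (q i - p i)`. Players `B` and `C` have opposite
incentives, so they cannot both put weight on `1`; the symmetry `q ↦ 1 - q`, `p ↦ 1 - p`,
`B ↔ C` reduces to `qB = 0`. Then `qC < 1` (otherwise every type-A player plays `1`, the total
excess is nonnegative and `C` would switch), so `|D| < 3δk`. A type-A player `j` with `q j < 1`
has `D₋ⱼ < δk`; hence every excess `q j - p j` is at least `-4δk`, and summing over `j ≠ i`
bounds `D₋ᵢ` below by `-4δk²`, while `D₋ᵢ ≤ 3δk`.
-/

open Finset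

variable {ι : Type*} [Fintype ι] [DecidableEq ι]

/-- The conditions of `AnonNash` multiplied by `k` and written in the excesses `x j = q j - p j`,
with `c = δ k` and `e = δ' k`. A type-A player that plays `0` (resp. `1`) purely is recorded
only through `x i ≤ 0` (resp. `0 ≤ x i`). -/
structure ExcessEquilibrium (c e : ℝ) (x : ι → ℝ) (qB qC : ℝ) : Prop where
  le_sum_of_pos_B : 0 < qB → 2 * c - e ≤ ∑ j, x j
  sum_le_of_lt_one_B : qB < 1 → ∑ j, x j ≤ 2 * c + e
  le_neg_sum_of_pos_C : 0 < qC → 2 * c - e ≤ -∑ j, x j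
  neg_sum_le_of_lt_one_C : qC < 1 → -∑ j, x j ≤ 2 * c + e
  le_gain_or_nonpos : ∀ i,
    -e ≤ (∑ j ∈ univ.erase i, x j) * ((1 - qB) * (1 - qC)) + c * (qC - qB) ∨ x i ≤ 0
  gain_le_or_nonneg : ∀ i,
    (∑ j ∈ univ.erase i, x j) * ((1 - qB) * (1 - qC)) + c * (qC - qB) ≤ e ∨ 0 ≤ x i

namespace ExcessEquilibrium

variable {c e : ℝ} {x : ι → ℝ} {qB qC : ℝ}

theorem neg (h : ExcessEquilibrium c e x qB qC) : ExcessEquilibrium c e (-x) qC qB where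
  le_sum_of_pos_B hC := by simpa using h.le_neg_sum_of_pos_C hC
  sum_le_of_lt_one_B hC := by simpa using h.neg_sum_le_of_lt_one_C hC
  le_neg_sum_of_pos_C hB := by simpa using h.le_sum_of_pos_B hB
  neg_sum_le_of_lt_one_C hB := by simpa using h.sum_le_of_lt_one_B hB
  le_gain_or_nonpos i := by
    simp only [Pi.neg_apply, sum_neg_distrib, neg_nonpos]
    refine (h.gain_le_or_nonneg i).imp_left fun hi => ?_
    linarith
  gain_le_or_nonneg i := by
    simp only [Pi.neg_apply, sum_neg_distrib, neg_nonneg]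
    refine (h.le_gain_or_nonpos i).imp_left fun hi => ?_
    linarith

theorem not_pos_and_pos (h : ExcessEquilibrium c e x qB qC) (hc : 0 < c) (he : e < c)
    (hB : 0 < qB) (hC : 0 < qC) : False := by
  linarith [h.le_sum_of_pos_B hB, h.le_neg_sum_of_pos_C hC]

/-- With `B` at `0` and `C` at `1`, playing `0` is strictly better for every type-A player, so all
of them play `1` purely; the total excess is then nonnegative, and `C` would rather play `0`. -/
theorem lt_one_of_B_eq_zero (h : ExcessEquilibrium c e x 0 qC) (hc : 0 < c) (he : e < c)
    (hC : qC ≤ 1) : qC < 1 := by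
  refine hC.lt_of_ne fun hC1 => ?_
  subst hC1
  have hx : ∀ j, 0 ≤ x j := fun j =>
    (h.gain_le_or_nonneg j).resolve_left (by norm_num; linarith)
  linarith [h.le_neg_sum_of_pos_C one_pos, sum_nonneg fun j (_ : j ∈ univ) => hx j]

theorem sum_erase_lt_or_nonneg (h : ExcessEquilibrium c e x 0 qC) (he : e < c) (hC : qC < 1)
    (i : ι) : ∑ j ∈ univ.erase i, x j < c ∨ 0 ≤ x i := by
  refine (h.gain_le_or_nonneg i).imp_left fun hi => ?_
  have hpos : 0 < 1 - qC := by linarith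
  nlinarith

theorem sum_erase_le (h : ExcessEquilibrium c e x 0 qC) (hc : 0 < c) (he : e < c)
    (hC : qC < 1) (i : ι) : ∑ j ∈ univ.erase i, x j ≤ 3 * c := by
  have hsum := sum_erase_add univ x (mem_univ i)
  rcases h.sum_erase_lt_or_nonneg he hC i with hi | hi
  · linarith
  · linarith [h.sum_le_of_lt_one_B one_pos]

theorem neg_four_mul_le (h : ExcessEquilibrium c e x 0 qC) (hc : 0 < c) (he : e < c)
    (hC : qC < 1) (j : ι) : -(4 * c) ≤ x j := by
  have hsum := sum_erase_add univ x (mem_univ j)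
  rcases h.sum_erase_lt_or_nonneg he hC j with hj | hj
  · linarith [h.neg_sum_le_of_lt_one_C hC]
  · linarith

theorem neg_four_mul_card_le (h : ExcessEquilibrium c e x 0 qC) (hc : 0 < c) (he : e < c)
    (hC : qC < 1) (i : ι) : -(4 * c * Fintype.card ι) ≤ ∑ j ∈ univ.erase i, x j := by
  have hcard : ((univ.erase i).card : ℝ) ≤ Fintype.card ι := by
    exact_mod_cast card_erase_le
  have := card_nsmul_le_sum _ _ _ fun j (_ : j ∈ univ.erase i) => h.neg_four_mul_le hc he hC j
  rw [nsmul_eq_mul] at this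
  nlinarith

theorem abs_sum_erase_le_of_B_eq_zero (h : ExcessEquilibrium c e x 0 qC) (hc : 0 < c)
    (he : e < c) (hC : qC ≤ 1) (i : ι) :
    |∑ j ∈ univ.erase i, x j| ≤ 4 * c * Fintype.card ι := by
  have hC1 := h.lt_one_of_B_eq_zero hc he hC
  have hcard : (1 : ℝ) ≤ Fintype.card ι := by
    exact_mod_cast Fintype.card_pos_iff.mpr ⟨i⟩
  rw [abs_le]
  exact ⟨h.neg_four_mul_card_le hc he hC1 i, by nlinarith [h.sum_erase_le hc he hC1 i]⟩

theorem abs_sum_erase_le (h : ExcessEquilibrium c e x qB qC) (hc : 0 < c) (he : e < c)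
    (hB : qB ∈ Set.Icc 0 1) (hC : qC ∈ Set.Icc 0 1) (i : ι) :
    |∑ j ∈ univ.erase i, x j| ≤ 4 * c * Fintype.card ι := by
  rcases hB.1.eq_or_lt with hB0 | hBpos
  · subst hB0
    exact h.abs_sum_erase_le_of_B_eq_zero hc he hC.2 i
  · obtain rfl : qC = 0 :=
      hC.1.antisymm' (not_lt.mp fun hCpos => h.not_pos_and_pos hc he hBpos hCpos)
    simpa only [Pi.neg_apply, sum_neg_distrib, abs_neg] using
      h.neg.abs_sum_erase_le_of_B_eq_zero hc he hB.2 i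

end ExcessEquilibrium

theorem sub_mul_le_of_div_sub_le_div {a b d k : ℝ} (hk : 0 < k) (h : b / k - d ≤ a / k) :
    b - d * k ≤ a := by
  rwa [← mul_div_cancel_right₀ d hk.ne', ← sub_div, div_le_div_iff_of_pos_right hk] at h

theorem AnonNash.excessEquilibrium {k : ℕ} {δ δ' : ℝ} {p q : Fin k → ℝ} {qB qC : ℝ}
    (h : AnonNash k δ p δ' q qB qC) (hk : (0 : ℝ) < k) (hp : ∀ i, p i ∈ Set.Icc 0 1)
    (hq : ∀ i, q i ∈ Set.Icc 0 1) :
    ExcessEquilibrium (δ * k) (δ' * k) (fun j => q j - p j) qB qC := by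
  obtain ⟨hB1, hB0, hC1, hC0, hA⟩ := h
  refine ⟨fun hB => ?_, fun hB => ?_, fun hC => ?_, fun hC => ?_, fun i => ?_, fun i => ?_⟩
  all_goals simp only [sum_sub_distrib]
  · linarith [(le_div_iff₀ hk).mp (hB1 hB)]
  · have : (∑ i, q i - ∑ i, p i) / k ≤ 2 * δ + δ' := by linarith [hB0 hB]
    linarith [(div_le_iff₀ hk).mp this]
  · linarith [(le_div_iff₀ hk).mp (hC1 hC)]
  · have : (∑ i, p i - ∑ i, q i) / k ≤ 2 * δ + δ' := by linarith [hC0 hC]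
    linarith [(div_le_iff₀ hk).mp this]
  · rcases (hq i).1.eq_or_lt with hqi | hqi
    · right
      linarith [(hp i).1]
    · left
      linarith [sub_mul_le_of_div_sub_le_div hk ((hA i).1 hqi)]
  · rcases (hq i).2.eq_or_lt with hqi | hqi
    · right
      linarith [(hp i).2]
    · left
      linarith [sub_mul_le_of_div_sub_le_div hk ((hA i).2 hqi)]

theorem stmt16_general (k : ℕ) (δ : ℝ) (hδ : 0 < δ)
    (p : Fin k → ℝ) (hp : ∀ i, 3 * δ * k ≤ p i ∧ p i ≤ 1)
    (δ' : ℝ) (hδ' : δ' < δ)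
    (q : Fin k → ℝ) (qB qC : ℝ)
    (hq : ∀ i, q i ∈ Set.Icc (0 : ℝ) 1)
    (hqB : qB ∈ Set.Icc (0 : ℝ) 1) (hqC : qC ∈ Set.Icc (0 : ℝ) 1)
    (hNash : AnonNash k δ p δ' q qB qC) :
    ∀ i, |∑ j ∈ Finset.univ.erase i, q j - ∑ j ∈ Finset.univ.erase i, p j| ≤ 4 * δ * k ^ 2 := by
  intro i
  have hk : (0 : ℝ) < k := by exact_mod_cast i.pos
  have hp01 : ∀ j, p j ∈ Set.Icc 0 1 := fun j =>
    ⟨(by positivity : (0 : ℝ) ≤ 3 * δ * k).trans (hp j).1, (hp j).2⟩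
  have hx := hNash.excessEquilibrium hk hp01 hq
  calc _ = |∑ j ∈ univ.erase i, (q j - p j)| := by rw [sum_sub_distrib]
    _ ≤ 4 * (δ * k) * Fintype.card (Fin k) :=
      hx.abs_sum_erase_le (mul_pos hδ hk) (mul_lt_mul_of_pos_right hδ' hk) hqB hqC i
    _ = 4 * δ * k ^ 2 := by rw [Fintype.card_fin]; ring

/-- In every δ′-Nash equilibrium of the constructed anonymous game (δ′ < δ), for every type-A player i, the total mass of the other type-A players is within 4δk² of μ₋ᵢ. -/
theorem stmt16 (k : ℕ) (hk : 1 ≤ k) (δ : ℝ) (hδ : 0 < δ)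
    (p : Fin k → ℝ) (hp : ∀ i, 3 * δ * k ≤ p i ∧ p i ≤ 1)
    (δ' : ℝ) (hδ'0 : 0 ≤ δ') (hδ' : δ' < δ)
    (q : Fin k → ℝ) (qB qC : ℝ)
    (hq : ∀ i, q i ∈ Set.Icc (0 : ℝ) 1)
    (hqB : qB ∈ Set.Icc (0 : ℝ) 1) (hqC : qC ∈ Set.Icc (0 : ℝ) 1)
    (hNash : AnonNash k δ p δ' q qB qC) :
    ∀ i, |∑ j ∈ Finset.univ.erase i, q j - ∑ j ∈ Finset.univ.erase i, p j| ≤ 4 * δ * k ^ 2 :=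
  stmt16_general k δ hδ p hp δ' hδ' q qB qC hq hqB hqC hNash
end
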